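/- arXiv:1407.3414 — 5 statements merged into one kernel-verified Lean document; each statement's English description precedes it below -/
import Mathlib

section
/- Under assumptions (C1)–(C3), for any y ∈ ℝ and any regime π = (π₁, π₂), the survival function of the potential outcome under π satisfies pr{Y*(π) ≥ y} = E[ Σ_{a₁∈{−1,1}} 1{π₁(H₁) = a₁} · E{ Σ_{a₂∈{−1,1}} 1{π₂(H₂) = a₂} · R(y; X₁, a₁, X₂, a₂) | X₁, A₁ = a₁ } ]. -/
/-!
At stage two, sequential ignorability makes `{Y*(a₁, a₂) ≥ y}` conditionally independent of `A₂`
given `H₂`; together with consistency and positivity this identifies `pr(Y*(a₁, a₂) ≥ y | H₂)` with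
`R(y; X₁, a₁, X₂, a₂)` on `{A₁ = a₁}`. At stage one, `A₁` is conditionally independent of
`(X₁, W)` given `X₁`, so for `Ψ(a₁) = 1{Y*(a₁, π₂(H₂*(a₁))) ≥ y}`
`pr(A₁ = a₁ | X₁) E{Ψ(a₁) | X₁} = E{1{A₁ = a₁} Σ_{a₂} 1{π₂(H₂) = a₂} R(y; X₁, a₁, X₂, a₂) | X₁}`,
which is `pr(A₁ = a₁ | X₁) ρ(a₁, X₁)` by the defining property of `ρ`. Dividing by the positive
propensity gives `E{Ψ(a₁) | X₁} = ρ(a₁, X₁)`, and `1{Y*(π) ≥ y} = Σ_{a₁} 1{π₁(X₁) = a₁} Ψ(a₁)`.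
-/

open MeasureTheory ProbabilityTheory Set Finset

noncomputable section

/-- The potential outcome under the regime `π = (π₁, π₂)`:
`Y*(π) = Σ_{(a₁,a₂) ∈ {−1,1}²} Y*(a₁,a₂) 1{π₁(H₁)=a₁} 1{π₂(H₂*(a₁))=a₂}`,
where `H₁ = X₁` and `H₂*(a₁) = (X₁, a₁, X₂*(a₁))`. -/
def Ypi {Ω : Type*} {p₁ p₂ : ℕ}
    (X₁ : Ω → (Fin p₁ → ℝ)) (X₂star : ℝ → Ω → (Fin p₂ → ℝ))
    (Ystar : ℝ → ℝ → Ω → ℝ)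
    (π₁ : (Fin p₁ → ℝ) → ℝ) (π₂ : (Fin p₁ → ℝ) × ℝ × (Fin p₂ → ℝ) → ℝ) (ω : Ω) : ℝ :=
  ∑ a₁ ∈ ({-1, 1} : Finset ℝ), ∑ a₂ ∈ ({-1, 1} : Finset ℝ),
    (if π₁ (X₁ ω) = a₁ then (1:ℝ) else 0) *
      (if π₂ (X₁ ω, a₁, X₂star a₁ ω) = a₂ then (1:ℝ) else 0) * Ystar a₁ a₂ ω

/-- the collection `W` of all potential outcomes,
`W = {H₂*(a₁), Y*(a₁,a₂) : (a₁,a₂) ∈ {−1,1}²}` (with the common part `X₁` of the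
`H₂*(a₁)` recorded through `X₂*(a₁)`), bundled as a single random element. -/
def Wfun {Ω : Type*} {p₂ : ℕ} (X₂star : ℝ → Ω → (Fin p₂ → ℝ))
    (Ystar : ℝ → ℝ → Ω → ℝ) (ω : Ω) :
    ((Fin p₂ → ℝ) × (Fin p₂ → ℝ)) × (ℝ × ℝ × ℝ × ℝ) :=
  ((X₂star 1 ω, X₂star (-1) ω),
    (Ystar 1 1 ω, Ystar 1 (-1) ω, Ystar (-1) 1 ω, Ystar (-1) (-1) ω))

namespace MeasureTheory

variable {Ω : Type*} {mΩ : MeasurableSpace Ω} {μ : Measure Ω}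

theorem measurable_ite_one_zero {p : Ω → Prop} [DecidablePred p] (hp : MeasurableSet {ω | p ω}) :
    Measurable fun ω => if p ω then (1:ℝ) else 0 :=
  Measurable.ite hp measurable_const measurable_const

theorem abs_ite_one_zero_le_one (p : Prop) [Decidable p] : |(if p then (1:ℝ) else 0)| ≤ 1 := by
  split_ifs <;> simp

theorem integrable_ite_one_zero [IsFiniteMeasure μ] {p : Ω → Prop} [DecidablePred p]
    (hp : MeasurableSet {ω | p ω}) : Integrable (fun ω => if p ω then (1:ℝ) else 0) μ :=
  Integrable.of_bound (measurable_ite_one_zero hp).aestronglyMeasurable 1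
    (ae_of_all μ fun ω => abs_ite_one_zero_le_one (p ω))

theorem Integrable.ite_mul {f : Ω → ℝ} (hf : Integrable f μ) {p : Ω → Prop}
    [DecidablePred p] (hp : MeasurableSet {ω | p ω}) :
    Integrable (fun ω => (if p ω then 1 else 0) * f ω) μ :=
  hf.bdd_mul (measurable_ite_one_zero hp).aestronglyMeasurable
    (ae_of_all μ fun ω => abs_ite_one_zero_le_one (p ω))

end MeasureTheory

namespace ProbabilityTheory

variable {Ω : Type*} {m m₀ : MeasurableSpace Ω} {μ : Measure Ω}

theorem integral_mul_condExp_of_bound [IsFiniteMeasure μ] (hm : m ≤ m₀) {f h : Ω → ℝ}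
    (hh : StronglyMeasurable[m] h) (hf : Integrable f μ) {c : ℝ} (hc : ∀ᵐ ω ∂μ, |h ω| ≤ c) :
    ∫ ω, h ω * μ[f|m] ω ∂μ = ∫ ω, h ω * f ω ∂μ := by
  rw [← integral_condExp hm (f := fun ω => h ω * f ω)]
  exact integral_congr_ae
    (condExp_stronglyMeasurable_mul_of_bound hm hh hf c (by simpa using hc)).symm

theorem condExp_congr_of_forall_setIntegral_eq (hm : m ≤ m₀) [SigmaFinite (μ.trim hm)]
    {f g : Ω → ℝ} (hf : Integrable f μ) (hg : Integrable g μ)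
    (hfg : ∀ s, MeasurableSet[m] s → ∫ ω in s, f ω ∂μ = ∫ ω in s, g ω ∂μ) :
    μ[f|m] =ᵐ[μ] μ[g|m] :=
  ae_eq_condExp_of_forall_setIntegral_eq hm hg (fun _ _ _ => integrable_condExp.integrableOn)
    (fun s hs _ => by rw [setIntegral_condExp hm hf hs, hfg s hs])
    stronglyMeasurable_condExp.aestronglyMeasurable

theorem condExp_inter_ae_eq_indicator [IsFiniteMeasure μ] {s t : Set Ω}
    (hs : MeasurableSet[m] s) (ht : MeasurableSet t) :
    μ⟦s ∩ t | m⟧ =ᵐ[μ] s.indicator (μ⟦t | m⟧) := by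
  rw [← indicator_indicator]
  exact condExp_indicator ((integrable_const 1).indicator ht) hs

theorem condExp_indicator_ae_eq_mul_of_setIntegral_inter_eq (hm : m ≤ m₀) [IsFiniteMeasure μ]
    {S : Set Ω} (hS : MeasurableSet S) {f g : Ω → ℝ} (hf : Integrable f μ)
    (hg : StronglyMeasurable[m] g)
    (hfg : ∀ s, MeasurableSet[m] s → ∫ ω in s ∩ S, f ω ∂μ = ∫ ω in s ∩ S, g ω ∂μ) :
    μ[S.indicator f|m] =ᵐ[μ] μ⟦S | m⟧ * g := by
  -- set integrals of `g` may be junk, so compare on the `m`-measurable sets `{|g| ≤ n}`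
  have bounded_part (n : ℕ) :
      ∀ᵐ ω ∂μ, |g ω| ≤ n → μ[S.indicator f|m] ω = (μ⟦S | m⟧ * g) ω := by
    set t := {ω | |g ω| ≤ n}
    have ht : MeasurableSet[m] t := (measurable_abs.comp hg.measurable) measurableSet_Iic
    have hgt : ∀ ω, |t.indicator g ω| ≤ n := fun ω => by
      by_cases hω : ω ∈ t
      · rw [indicator_of_mem hω]; exact hω
      · simp [hω]
    have hS1 : Integrable (S.indicator fun _ => (1:ℝ)) μ := (integrable_const 1).indicator hS
    have pull_out := condExp_stronglyMeasurable_mul_of_bound hm (hg.indicator ht) hS1 n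
      (ae_of_all μ fun ω => by simpa using hgt ω)
    have restrict := condExp_indicator (hf.indicator hS) ht
    have same_integrals : μ[t.indicator g * S.indicator fun _ => 1|m]
        =ᵐ[μ] μ[t.indicator (S.indicator f)|m] := by
      refine condExp_congr_of_forall_setIntegral_eq hm
        (hS1.bdd_mul ((hg.indicator ht).mono hm).aestronglyMeasurable
          (ae_of_all μ fun ω => by simpa using hgt ω))
        ((hf.indicator hS).indicator (hm t ht)) fun s hs => ?_
      have hprod : t.indicator g * S.indicator (fun _ => 1) = (t ∩ S).indicator g := by
        ext ω; by_cases h₁ : ω ∈ t <;> by_cases h₂ : ω ∈ S <;> simp [h₁, h₂]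
      rw [hprod, indicator_indicator, setIntegral_indicator ((hm t ht).inter hS),
        setIntegral_indicator ((hm t ht).inter hS), ← Set.inter_assoc, hfg _ (hs.inter ht)]
    filter_upwards [pull_out, restrict, same_integrals] with ω h₁ h₂ h₃ hω
    have hωt : ω ∈ t := hω
    rw [Pi.mul_apply, indicator_of_mem hωt] at h₁
    rw [indicator_of_mem hωt] at h₂
    rw [← h₂, ← h₃, h₁, Pi.mul_apply, mul_comm]
  filter_upwards [ae_all_iff.2 bounded_part] with ω hω
  obtain ⟨n, hn⟩ := exists_nat_ge |g ω|
  exact hω n hn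

theorem condExp_sum_ae_eq_of_propensity_mul_ae_eq [IsFiniteMeasure μ] {ι : Type*} (s : Finset ι)
    {S : Set Ω} (hS : MeasurableSet S) (hpos : ∀ᵐ ω ∂μ, 0 < (μ⟦S | m⟧) ω) {ψ φ : ι → Ω → ℝ}
    {g : Ω → ℝ} (hψ : ∀ i ∈ s, Integrable (ψ i) μ) (hφ : ∀ i ∈ s, Integrable (φ i) μ)
    (hψφ : ∀ i ∈ s, μ⟦S | m⟧ * μ[ψ i|m] =ᵐ[μ] μ[S.indicator (φ i)|m])
    (hg : μ[S.indicator (fun ω => ∑ i ∈ s, φ i ω)|m] =ᵐ[μ] μ⟦S | m⟧ * g) :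
    μ[fun ω => ∑ i ∈ s, ψ i ω|m] =ᵐ[μ] g := by
  have hψ_sum := condExp_finsetSum hψ m
  have hφ_sum := condExp_finsetSum (fun i hi => (hφ i hi).indicator hS) m
  rw [← Finset.sum_fn]
  rw [← Finset.sum_fn, Finset.indicator_sum] at hg
  filter_upwards [hψ_sum, hφ_sum, hg, hpos, (Filter.eventually_all_finset s).2 hψφ]
    with ω h₁ h₂ h₃ h₄ h₅
  refine mul_left_cancel₀ h₄.ne' ?_
  simp only [Pi.mul_apply, Finset.sum_apply] at h₁ h₂ h₃ h₅ ⊢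
  rw [h₁, Finset.mul_sum, Finset.sum_congr rfl h₅, ← h₂, h₃]

theorem integral_sum_ite_mul_eq_of_condExp_ae_eq [IsFiniteMeasure μ] (hm : m ≤ m₀) {ι : Type*}
    (s : Finset ι) {p : ι → Ω → Prop} [∀ i, DecidablePred (p i)]
    (hp : ∀ i ∈ s, MeasurableSet[m] {ω | p i ω}) {Ψ g : ι → Ω → ℝ}
    (hΨ : ∀ i ∈ s, Integrable (Ψ i) μ) (hg : ∀ i ∈ s, μ[Ψ i|m] =ᵐ[μ] g i) :
    ∫ ω, ∑ i ∈ s, (if p i ω then 1 else 0) * Ψ i ω ∂μ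
      = ∫ ω, ∑ i ∈ s, (if p i ω then 1 else 0) * g i ω ∂μ := by
  rw [integral_finsetSum _ fun i hi => (hΨ i hi).ite_mul (hm _ (hp i hi)),
    integral_finsetSum _ fun i hi => (integrable_condExp.congr (hg i hi)).ite_mul (hm _ (hp i hi))]
  refine Finset.sum_congr rfl fun i hi => ?_
  rw [← integral_mul_condExp_of_bound hm (measurable_ite_one_zero (hp i hi)).stronglyMeasurable
    (hΨ i hi) (ae_of_all μ fun ω => abs_ite_one_zero_le_one _)]
  refine integral_congr_ae ?_
  filter_upwards [hg i hi] with ω h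
  rw [h]

theorem CondIndep.sup_conditioning_right [StandardBorelSpace Ω] {m₁ m₂ : MeasurableSpace Ω}
    {hm : m ≤ m₀} [IsFiniteMeasure μ] (h₁ : m₁ ≤ m₀) (h₂ : m₂ ≤ m₀)
    (h : CondIndep m m₁ m₂ hm μ) : CondIndep m m₁ (m ⊔ m₂) hm μ := by
  set p : Set (Set Ω) := {u | ∃ s t, MeasurableSet[m] s ∧ MeasurableSet[m₂] t ∧ s ∩ t = u}
  have hp_gen : m ⊔ m₂ = MeasurableSpace.generateFrom p := by
    refine le_antisymm (sup_le (fun s hs => ?_) (fun t ht => ?_)) ?_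
    · exact MeasurableSpace.measurableSet_generateFrom ⟨s, univ, hs, .univ, inter_univ s⟩
    · exact MeasurableSpace.measurableSet_generateFrom ⟨univ, t, .univ, ht, univ_inter t⟩
    · refine MeasurableSpace.generateFrom_le ?_
      rintro _ ⟨s, t, hs, ht, rfl⟩
      exact (le_sup_left (b := m₂) s hs).inter (le_sup_right (a := m) t ht)
  have hp_pi : IsPiSystem p := by
    rintro _ ⟨s, t, hs, ht, rfl⟩ _ ⟨s', t', hs', ht', rfl⟩ _
    exact ⟨s ∩ s', t ∩ t', hs.inter hs', ht.inter ht', by rw [inter_inter_inter_comm]⟩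
  refine CondIndepSets.condIndep h₁ (sup_le hm h₂) (@MeasurableSpace.isPiSystem_measurableSet Ω m₁)
    hp_pi (@MeasurableSpace.generateFrom_measurableSet Ω m₁).symm hp_gen ?_
  rw [condIndepSets_iff m hm {u | MeasurableSet[m₁] u} p (fun u hu => h₁ u hu)
    (by rintro _ ⟨s, t, hs, ht, rfl⟩; exact (hm s hs).inter (h₂ t ht))]
  rintro u _ hu ⟨s, t, hs, ht, rfl⟩
  -- `s` is `m`-measurable, so it factors out of both sides
  have hut := (condIndep_iff m m₁ m₂ hm h₁ h₂ μ).1 h u t hu ht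
  have hu' : MeasurableSet[m₀] u := h₁ u hu
  have ht' : MeasurableSet[m₀] t := h₂ t ht
  rw [Set.inter_left_comm]
  filter_upwards [condExp_inter_ae_eq_indicator (μ := μ) hs (hu'.inter ht'),
    condExp_inter_ae_eq_indicator (μ := μ) hs ht', hut] with ω hsut hst hut
  by_cases hω : ω ∈ s <;> simp_all

theorem CondIndepFun.prodMk_conditioning_right [StandardBorelSpace Ω] [IsFiniteMeasure μ]
    {β γ δ : Type*} [MeasurableSpace β] [MeasurableSpace γ] [MeasurableSpace δ]
    {A : Ω → β} {V : Ω → γ} {X : Ω → δ} (hA : Measurable A) (hV : Measurable V)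
    (hX : Measurable X) (h : A ⟂ᵢ[X, hX; μ] V) :
    A ⟂ᵢ[X, hX; μ] (fun ω => (X ω, V ω)) := by
  rw [condIndepFun_iff_condIndep] at h ⊢
  convert h.sup_conditioning_right hA.comap_le hV.comap_le using 1
  exact MeasurableSpace.comap_prodMk X V

end ProbabilityTheory

namespace DynamicRegime

section Stages

variable {Ω α₁ α₂ : Type*} [MeasurableSpace Ω] [StandardBorelSpace Ω] [MeasurableSpace α₁]
  [MeasurableSpace α₂] {P : Measure Ω} [IsFiniteMeasure P]
  {X₁ : Ω → α₁} {A₁ : Ω → ℝ} {X₂ : Ω → α₂} {A₂ : Ω → ℝ}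

theorem condExp_potentialSurvival_ae_eq (hX₁ : Measurable X₁) (hA₁ : Measurable A₁)
    (hX₂ : Measurable X₂) (hA₂ : Measurable A₂) {Y Yₐ : Ω → ℝ} (hY : Measurable Y)
    (hYₐ : Measurable Yₐ) {a₁ a₂ y : ℝ}
    (hC1Y : ∀ ω, A₁ ω = a₁ → A₂ ω = a₂ → Y ω = Yₐ ω)
    (hCI : CondIndepFun (MeasurableSpace.comap (fun ω => (X₁ ω, A₁ ω, X₂ ω)) inferInstance)
      (hX₁.prodMk (hA₁.prodMk hX₂)).comap_le A₂ Yₐ P)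
    (hpos : ∀ᵐ ω ∂P, 0 < (P⟦{ω | A₂ ω = a₂} |
      MeasurableSpace.comap (fun ω => (X₁ ω, A₁ ω, X₂ ω)) inferInstance⟧) ω)
    {r : α₁ → α₂ → ℝ} (hr : Measurable fun x : α₁ × α₂ => r x.1 x.2)
    (hR : ∀ B : Set (α₁ × α₂), MeasurableSet B →
      (P {ω | y ≤ Y ω ∧ (X₁ ω, X₂ ω) ∈ B ∧ A₁ ω = a₁ ∧ A₂ ω = a₂}).toReal
        = ∫ ω in {ω | (X₁ ω, X₂ ω) ∈ B ∧ A₁ ω = a₁ ∧ A₂ ω = a₂}, r (X₁ ω) (X₂ ω) ∂P) :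
    ∀ᵐ ω ∂P, A₁ ω = a₁ →
      (P⟦{ω | y ≤ Yₐ ω} | MeasurableSpace.comap (fun ω => (X₁ ω, A₁ ω, X₂ ω)) inferInstance⟧) ω
        = r (X₁ ω) (X₂ ω) := by
  set H₂ := fun ω => (X₁ ω, A₁ ω, X₂ ω)
  have hH₂ : Measurable H₂ := hX₁.prodMk (hA₁.prodMk hX₂)
  set S₁ := {ω | A₁ ω = a₁}
  set S₂ := {ω | A₂ ω = a₂}
  have hS₁ : MeasurableSet[MeasurableSpace.comap H₂ inferInstance] S₁ :=
    ⟨{h | h.2.1 = a₁}, (measurable_fst.comp measurable_snd) (measurableSet_singleton a₁), rfl⟩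
  have hS₂ : MeasurableSet S₂ := hA₂ (measurableSet_singleton a₂)
  have hT : MeasurableSet {ω | y ≤ Yₐ ω} := hYₐ measurableSet_Ici
  have hTY : MeasurableSet {ω | y ≤ Y ω} := hY measurableSet_Ici
  have ignorability : P⟦S₂ ∩ {ω | y ≤ Yₐ ω} | MeasurableSpace.comap H₂ inferInstance⟧
      =ᵐ[P] fun ω => (P⟦S₂ | MeasurableSpace.comap H₂ inferInstance⟧) ω
        * (P⟦{ω | y ≤ Yₐ ω} | MeasurableSpace.comap H₂ inferInstance⟧) ω :=
    (condIndepFun_iff_condExp_inter_preimage_eq_mul hA₂ hYₐ).1 hCI {a₂} (Ici y)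
      (measurableSet_singleton a₂) measurableSet_Ici
  have consistency : (S₁ ∩ S₂).indicator ({ω | y ≤ Y ω}.indicator fun _ => (1:ℝ))
      = (S₁ ∩ (S₂ ∩ {ω | y ≤ Yₐ ω})).indicator fun _ => 1 := by
    ext ω
    by_cases h₁ : A₁ ω = a₁ <;> by_cases h₂ : A₂ ω = a₂ <;>
      simp [S₁, S₂, indicator_apply, h₁, h₂, hC1Y ω]
  have same_integrals : ∀ s, MeasurableSet[MeasurableSpace.comap H₂ inferInstance] s →
      ∫ ω in s ∩ (S₁ ∩ S₂), {ω | y ≤ Y ω}.indicator (fun _ => (1:ℝ)) ω ∂P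
        = ∫ ω in s ∩ (S₁ ∩ S₂), r (X₁ ω) (X₂ ω) ∂P := by
    rintro _ ⟨B, hB, rfl⟩
    have hslice : MeasurableSet {x : α₁ × α₂ | (x.1, a₁, x.2) ∈ B} :=
      (measurable_fst.prodMk (measurable_const.prodMk measurable_snd)) hB
    have hset : H₂ ⁻¹' B ∩ (S₁ ∩ S₂)
        = {ω | (X₁ ω, X₂ ω) ∈ {x | (x.1, a₁, x.2) ∈ B} ∧ A₁ ω = a₁ ∧ A₂ ω = a₂} := by
      ext ω
      simp only [H₂, S₁, S₂, Set.mem_inter_iff, Set.mem_preimage, mem_ofPred_eq]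
      constructor
      · rintro ⟨hB, h₁, h₂⟩; exact ⟨by rwa [h₁] at hB, h₁, h₂⟩
      · rintro ⟨hB, h₁, h₂⟩; exact ⟨by rwa [h₁], h₁, h₂⟩
    rw [setIntegral_indicator hTY, setIntegral_const, smul_eq_mul, mul_one, measureReal_def,
      hset, ← hR _ hslice]
    congr 2
    ext ω
    simp only [Set.mem_inter_iff, mem_ofPred_eq]
    tauto
  have identification := condExp_indicator_ae_eq_mul_of_setIntegral_inter_eq (μ := P)
    hH₂.comap_le (S := S₁ ∩ S₂) ((hA₁ (measurableSet_singleton a₁)).inter hS₂)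
    ((integrable_const (1:ℝ)).indicator hTY)
    ((hr.comp (measurable_fst.prodMk (measurable_snd.comp measurable_snd))).comp
      (comap_measurable H₂)).stronglyMeasurable same_integrals
  rw [consistency] at identification
  filter_upwards [identification, ignorability, hpos,
    condExp_inter_ae_eq_indicator (μ := P) hS₁ (hS₂.inter hT),
    condExp_inter_ae_eq_indicator (μ := P) hS₁ hS₂] with ω h₁ h₂ h₃ h₄ h₅ hω
  have hω' : ω ∈ S₁ := hω
  rw [h₄, indicator_of_mem hω', h₂, Pi.mul_apply, h₅, indicator_of_mem hω'] at h₁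
  exact mul_left_cancel₀ h₃.ne' h₁

theorem propensity_mul_condExp_ae_eq (hX₁ : Measurable X₁) (hA₁ : Measurable A₁)
    (hX₂ : Measurable X₂) {X₂ₐ : Ω → α₂} {Yₐ : Ω → ℝ} (hX₂ₐ : Measurable X₂ₐ)
    (hYₐ : Measurable Yₐ) {π₂ : α₁ × ℝ × α₂ → ℝ} (hπ₂ : Measurable π₂) {a₁ a₂ y : ℝ}
    (hC1X : ∀ ω, A₁ ω = a₁ → X₂ ω = X₂ₐ ω)
    (hCI : A₁ ⟂ᵢ[X₁, hX₁; P] (fun ω => (X₂ₐ ω, Yₐ ω)))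
    {r : α₁ → α₂ → ℝ}
    (hS2 : ∀ᵐ ω ∂P, A₁ ω = a₁ →
      (P⟦{ω | y ≤ Yₐ ω} | MeasurableSpace.comap (fun ω => (X₁ ω, A₁ ω, X₂ ω)) inferInstance⟧) ω
        = r (X₁ ω) (X₂ ω)) :
    P⟦{ω | A₁ ω = a₁} | MeasurableSpace.comap X₁ inferInstance⟧
        * P[fun ω => (if π₂ (X₁ ω, a₁, X₂ₐ ω) = a₂ then 1 else 0) * (if y ≤ Yₐ ω then 1 else 0)
          | MeasurableSpace.comap X₁ inferInstance]
      =ᵐ[P] P[{ω | A₁ ω = a₁}.indicator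
          (fun ω => (if π₂ (X₁ ω, A₁ ω, X₂ ω) = a₂ then 1 else 0) * r (X₁ ω) (X₂ ω))
          | MeasurableSpace.comap X₁ inferInstance] := by
  set H₂ := fun ω => (X₁ ω, A₁ ω, X₂ ω)
  have hH₂ : Measurable H₂ := hX₁.prodMk (hA₁.prodMk hX₂)
  have hm₁₂ : MeasurableSpace.comap X₁ inferInstance ≤ MeasurableSpace.comap H₂ inferInstance :=
    (measurable_fst.comp (comap_measurable H₂)).comap_le
  set S₁ := {ω | A₁ ω = a₁}
  set V := fun ω => (X₁ ω, X₂ₐ ω, Yₐ ω)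
  set T := {v : α₁ × α₂ × ℝ | π₂ (v.1, a₁, v.2.1) = a₂ ∧ y ≤ v.2.2}
  have hT : MeasurableSet T :=
    ((hπ₂.comp (measurable_fst.prodMk (measurable_const.prodMk
      (measurable_fst.comp measurable_snd)))) (measurableSet_singleton a₂)).inter
      (measurableSet_le measurable_const (measurable_snd.comp measurable_snd))
  have hψ : (fun ω => (if π₂ (X₁ ω, a₁, X₂ₐ ω) = a₂ then (1:ℝ) else 0)
      * (if y ≤ Yₐ ω then 1 else 0)) = (V ⁻¹' T).indicator fun _ => 1 := by
    ext ω
    by_cases h₁ : π₂ (X₁ ω, a₁, X₂ₐ ω) = a₂ <;> by_cases h₂ : y ≤ Yₐ ω <;>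
      simp [V, T, h₁, h₂]
  set k := S₁.indicator fun ω => if π₂ (H₂ ω) = a₂ then (1:ℝ) else 0
  have hk : StronglyMeasurable[MeasurableSpace.comap H₂ inferInstance] k :=
    (measurable_ite_one_zero ((hπ₂.comp (comap_measurable H₂)) (measurableSet_singleton a₂)))
      |>.stronglyMeasurable.indicator
        ⟨{h | h.2.1 = a₁}, (measurable_fst.comp measurable_snd) (measurableSet_singleton a₁), rfl⟩
  have hk1 : ∀ ω, ‖k ω‖ ≤ 1 := fun ω => by
    by_cases h₀ : ω ∈ S₁ <;> simp only [k, indicator_apply, h₀] <;> split_ifs <;> simp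
  have consistency : (S₁ ∩ V ⁻¹' T).indicator (fun _ => (1:ℝ))
      = k * {ω | y ≤ Yₐ ω}.indicator fun _ => 1 := by
    ext ω
    by_cases h₀ : A₁ ω = a₁
    · by_cases h₁ : π₂ (X₁ ω, a₁, X₂ₐ ω) = a₂ <;> by_cases h₂ : y ≤ Yₐ ω <;>
        simp [S₁, k, H₂, V, T, h₀, h₁, h₂, hC1X ω h₀]
    · simp [S₁, k, indicator_apply, h₀]
  have ignorability := (condIndepFun_iff_condExp_inter_preimage_eq_mul hA₁
    (hX₁.prodMk (hX₂ₐ.prodMk hYₐ))).1 (hCI.prodMk_conditioning_right hA₁ (hX₂ₐ.prodMk hYₐ) hX₁)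
    {a₁} T (measurableSet_singleton a₁) hT
  have pull_out := condExp_stronglyMeasurable_mul_of_bound hH₂.comap_le hk
    ((integrable_const (1:ℝ)).indicator (hYₐ (measurableSet_Ici (a := y)))) 1 (ae_of_all P hk1)
  have stage_two : k * P⟦{ω | y ≤ Yₐ ω} | MeasurableSpace.comap H₂ inferInstance⟧
      =ᵐ[P] S₁.indicator
        (fun ω => (if π₂ (X₁ ω, A₁ ω, X₂ ω) = a₂ then 1 else 0) * r (X₁ ω) (X₂ ω)) := by
    filter_upwards [hS2] with ω hω
    by_cases h₀ : A₁ ω = a₁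
    · simp [S₁, k, H₂, h₀, hω h₀]
    · simp [S₁, k, h₀]
  rw [hψ]
  calc _ =ᵐ[P] P⟦S₁ ∩ V ⁻¹' T | MeasurableSpace.comap X₁ inferInstance⟧ := ignorability.symm
    _ = P[k * {ω | y ≤ Yₐ ω}.indicator (fun _ => 1) | MeasurableSpace.comap X₁ inferInstance] := by
        rw [consistency]
    _ =ᵐ[P] P[P[k * {ω | y ≤ Yₐ ω}.indicator (fun _ => 1) | MeasurableSpace.comap H₂ inferInstance]
          | MeasurableSpace.comap X₁ inferInstance] :=
        (condExp_condExp_of_le hm₁₂ hH₂.comap_le).symm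
    _ =ᵐ[P] _ := condExp_congr_ae (pull_out.trans stage_two)

end Stages

theorem indicator_le_Ypi {Ω : Type*} {p₁ p₂ : ℕ} (X₁ : Ω → (Fin p₁ → ℝ))
    (X₂star : ℝ → Ω → (Fin p₂ → ℝ)) (Ystar : ℝ → ℝ → Ω → ℝ) {π₁ : (Fin p₁ → ℝ) → ℝ}
    {π₂ : (Fin p₁ → ℝ) × ℝ × (Fin p₂ → ℝ) → ℝ}
    (hπ₁v : ∀ x, π₁ x = 1 ∨ π₁ x = -1) (hπ₂v : ∀ x, π₂ x = 1 ∨ π₂ x = -1) (y : ℝ) (ω : Ω) :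
    {ω | y ≤ Ypi X₁ X₂star Ystar π₁ π₂ ω}.indicator (fun _ => (1:ℝ)) ω
      = ∑ a₁ ∈ ({-1, 1} : Finset ℝ), (if π₁ (X₁ ω) = a₁ then 1 else 0) *
          ∑ a₂ ∈ ({-1, 1} : Finset ℝ), (if π₂ (X₁ ω, a₁, X₂star a₁ ω) = a₂ then 1 else 0) *
            (if y ≤ Ystar a₁ a₂ ω then 1 else 0) := by
  have hne : (-1:ℝ) ≠ 1 := by norm_num
  rw [indicator_apply]
  rcases hπ₁v (X₁ ω) with h₁ | h₁
  · rcases hπ₂v (X₁ ω, 1, X₂star 1 ω) with h₂ | h₂ <;>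
      simp [Ypi, Finset.sum_pair hne, h₁, h₂, hne, hne.symm]
  · rcases hπ₂v (X₁ ω, -1, X₂star (-1) ω) with h₂ | h₂ <;>
      simp [Ypi, Finset.sum_pair hne, h₁, h₂, hne, hne.symm]

theorem measurable_Ypi {Ω : Type*} [MeasurableSpace Ω] {p₁ p₂ : ℕ} {X₁ : Ω → (Fin p₁ → ℝ)}
    {X₂star : ℝ → Ω → (Fin p₂ → ℝ)} {Ystar : ℝ → ℝ → Ω → ℝ} {π₁ : (Fin p₁ → ℝ) → ℝ}
    {π₂ : (Fin p₁ → ℝ) × ℝ × (Fin p₂ → ℝ) → ℝ} (hX₁ : Measurable X₁)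
    (hX₂star : ∀ a₁, Measurable (X₂star a₁)) (hYstar : ∀ a₁ a₂, Measurable (Ystar a₁ a₂))
    (hπ₁ : Measurable π₁) (hπ₂ : Measurable π₂) :
    Measurable (Ypi X₁ X₂star Ystar π₁ π₂) :=
  Finset.measurable_sum _ fun a₁ _ => Finset.measurable_sum _ fun a₂ _ =>
    ((measurable_ite_one_zero ((hπ₁.comp hX₁) (measurableSet_singleton a₁))).mul
      (measurable_ite_one_zero ((hπ₂.comp (hX₁.prodMk (measurable_const.prodMk (hX₂star a₁))))
        (measurableSet_singleton a₂)))).mul (hYstar a₁ a₂)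

theorem condIndepFun_potentialOutcome {Ω : Type*} {m mΩ : MeasurableSpace Ω}
    [StandardBorelSpace Ω] {hm : m ≤ mΩ} {P : Measure Ω} [IsFiniteMeasure P] {p₂ : ℕ}
    {β : Type*} [MeasurableSpace β] {A : Ω → β} {X₂star : ℝ → Ω → (Fin p₂ → ℝ)}
    {Ystar : ℝ → ℝ → Ω → ℝ} {a₁ a₂ : ℝ} (ha₁ : a₁ ∈ ({-1, 1} : Set ℝ))
    (ha₂ : a₂ ∈ ({-1, 1} : Set ℝ)) (h : CondIndepFun m hm A (Wfun X₂star Ystar) P) :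
    CondIndepFun m hm A (fun ω => (X₂star a₁ ω, Ystar a₁ a₂ ω)) P := by
  obtain ⟨G, hG, hGW⟩ : ∃ G : ((Fin p₂ → ℝ) × (Fin p₂ → ℝ)) × (ℝ × ℝ × ℝ × ℝ) → _,
      Measurable G ∧ ∀ ω, G (Wfun X₂star Ystar ω) = (X₂star a₁ ω, Ystar a₁ a₂ ω) := by
    rcases ha₁ with rfl | rfl <;> rcases ha₂ with rfl | rfl
    exacts [⟨fun w => (w.1.2, w.2.2.2.2), by fun_prop, fun _ => rfl⟩,
      ⟨fun w => (w.1.2, w.2.2.2.1), by fun_prop, fun _ => rfl⟩,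
      ⟨fun w => (w.1.1, w.2.2.1), by fun_prop, fun _ => rfl⟩,
      ⟨fun w => (w.1.1, w.2.1), by fun_prop, fun _ => rfl⟩]
  simpa [Function.comp_def, hGW] using h.comp measurable_id hG

section Model

variable {Ω : Type*} [MeasurableSpace Ω] {P : Measure Ω} [IsFiniteMeasure P] {p₁ p₂ : ℕ}
  {X₁ : Ω → (Fin p₁ → ℝ)} {A₁ : Ω → ℝ} {X₂ : Ω → (Fin p₂ → ℝ)} {A₂ Y : Ω → ℝ}
  {X₂star : ℝ → Ω → (Fin p₂ → ℝ)} {Ystar : ℝ → ℝ → Ω → ℝ}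
  {π₂ : (Fin p₁ → ℝ) × ℝ × (Fin p₂ → ℝ) → ℝ}

theorem integrable_regimeTerm (hX₁ : Measurable X₁) (hX₂star : ∀ a₁, Measurable (X₂star a₁))
    (hYstar : ∀ a₁ a₂, Measurable (Ystar a₁ a₂)) (hπ₂ : Measurable π₂) (a₁ a₂ y : ℝ) :
    Integrable (fun ω => (if π₂ (X₁ ω, a₁, X₂star a₁ ω) = a₂ then 1 else 0)
      * (if y ≤ Ystar a₁ a₂ ω then (1:ℝ) else 0)) P := by
  refine (integrable_ite_one_zero ?_).ite_mul ?_
  · exact hYstar a₁ a₂ measurableSet_Ici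
  · exact (hπ₂.comp (hX₁.prodMk (measurable_const.prodMk (hX₂star a₁))))
      (measurableSet_singleton a₂)

theorem condExp_regimeSurvival_ae_eq [StandardBorelSpace Ω] (hX₁ : Measurable X₁)
    (hA₁ : Measurable A₁) (hX₂ : Measurable X₂) (hA₂ : Measurable A₂) (hY : Measurable Y)
    (hX₂star : ∀ a₁, Measurable (X₂star a₁)) (hYstar : ∀ a₁ a₂, Measurable (Ystar a₁ a₂))
    (hC1X : ∀ ω, X₂ ω = X₂star (A₁ ω) ω) (hC1Y : ∀ ω, Y ω = Ystar (A₁ ω) (A₂ ω) ω)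
    (hC2₁ : A₁ ⟂ᵢ[X₁, hX₁; P] Wfun X₂star Ystar)
    (hC2₂ : A₂ ⟂ᵢ[fun ω => (X₁ ω, A₁ ω, X₂ ω), hX₁.prodMk (hA₁.prodMk hX₂); P]
      Wfun X₂star Ystar)
    {a₁ : ℝ} (ha₁ : a₁ ∈ ({-1, 1} : Set ℝ))
    (hpos₁ : ∀ᵐ ω ∂P, 0 < (P⟦{ω | A₁ ω = a₁} | MeasurableSpace.comap X₁ inferInstance⟧) ω)
    (hpos₂ : ∀ a₂ ∈ ({-1, 1} : Set ℝ), ∀ᵐ ω ∂P, 0 < (P⟦{ω | A₂ ω = a₂} |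
      MeasurableSpace.comap (fun ω => (X₁ ω, A₁ ω, X₂ ω)) inferInstance⟧) ω)
    {y : ℝ} {R : (Fin p₁ → ℝ) → ℝ → (Fin p₂ → ℝ) → ℝ → ℝ}
    (hR_meas : ∀ a₁ a₂, Measurable fun x : (Fin p₁ → ℝ) × (Fin p₂ → ℝ) => R x.1 a₁ x.2 a₂)
    (hR_mem : ∀ x₁ a₁ x₂ a₂, R x₁ a₁ x₂ a₂ ∈ Icc (0:ℝ) 1)
    (hR : ∀ a₁ a₂ : ℝ, ∀ B : Set ((Fin p₁ → ℝ) × (Fin p₂ → ℝ)), MeasurableSet B →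
      (P {ω | y ≤ Y ω ∧ (X₁ ω, X₂ ω) ∈ B ∧ A₁ ω = a₁ ∧ A₂ ω = a₂}).toReal
        = ∫ ω in {ω | (X₁ ω, X₂ ω) ∈ B ∧ A₁ ω = a₁ ∧ A₂ ω = a₂}, R (X₁ ω) a₁ (X₂ ω) a₂ ∂P)
    (hπ₂ : Measurable π₂) {g : (Fin p₁ → ℝ) → ℝ} (hg : Measurable g)
    (hρ : ∀ B : Set (Fin p₁ → ℝ), MeasurableSet B →
      ∫ ω in {ω | X₁ ω ∈ B ∧ A₁ ω = a₁}, (∑ a₂ ∈ ({-1, 1} : Finset ℝ),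
          (if π₂ (X₁ ω, A₁ ω, X₂ ω) = a₂ then (1:ℝ) else 0) * R (X₁ ω) a₁ (X₂ ω) a₂) ∂P
        = ∫ ω in {ω | X₁ ω ∈ B ∧ A₁ ω = a₁}, g (X₁ ω) ∂P) :
    P[fun ω => ∑ a₂ ∈ ({-1, 1} : Finset ℝ), (if π₂ (X₁ ω, a₁, X₂star a₁ ω) = a₂ then 1 else 0)
        * (if y ≤ Ystar a₁ a₂ ω then 1 else 0) | MeasurableSpace.comap X₁ inferInstance]
      =ᵐ[P] fun ω => g (X₁ ω) := by
  have hφ (a₂ : ℝ) : Integrable (fun ω => (if π₂ (X₁ ω, A₁ ω, X₂ ω) = a₂ then 1 else 0)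
      * R (X₁ ω) a₁ (X₂ ω) a₂) P := by
    refine (Integrable.of_bound ((hR_meas a₁ a₂).comp (hX₁.prodMk hX₂)).aestronglyMeasurable 1
      (ae_of_all P fun ω => ?_)).ite_mul ?_
    · obtain ⟨h₀, h₁⟩ := hR_mem (X₁ ω) a₁ (X₂ ω) a₂
      exact abs_le.2 ⟨(neg_nonpos.2 zero_le_one).trans h₀, h₁⟩
    · exact (hπ₂.comp (hX₁.prodMk (hA₁.prodMk hX₂))) (measurableSet_singleton a₂)
  refine condExp_sum_ae_eq_of_propensity_mul_ae_eq _ (hA₁ (measurableSet_singleton a₁)) hpos₁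
    (fun a₂ _ => integrable_regimeTerm hX₁ hX₂star hYstar hπ₂ a₁ a₂ y) (fun a₂ _ => hφ a₂)
    (fun a₂ ha₂ => ?_) ?_
  · have ha₂' : a₂ ∈ ({-1, 1} : Set ℝ) := by simpa using ha₂
    have stage_two := condExp_potentialSurvival_ae_eq (r := fun x₁ x₂ => R x₁ a₁ x₂ a₂)
      hX₁ hA₁ hX₂ hA₂ hY (hYstar a₁ a₂) (fun ω h₁ h₂ => by rw [hC1Y ω, h₁, h₂])
      ((condIndepFun_potentialOutcome ha₁ ha₂' hC2₂).comp measurable_id measurable_snd)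
      (hpos₂ a₂ ha₂') (hR_meas a₁ a₂) (hR a₁ a₂)
    exact propensity_mul_condExp_ae_eq (y := y) (r := fun x₁ x₂ => R x₁ a₁ x₂ a₂) hX₁ hA₁ hX₂
      (hX₂star a₁) (hYstar a₁ a₂) hπ₂
      (fun ω h => by rw [hC1X ω, h]) (condIndepFun_potentialOutcome ha₁ ha₂' hC2₁) stage_two
  · refine condExp_indicator_ae_eq_mul_of_setIntegral_inter_eq hX₁.comap_le
      (hA₁ (measurableSet_singleton a₁)) (integrable_finsetSum _ fun a₂ _ => hφ a₂)
      (hg.comp (comap_measurable X₁)).stronglyMeasurable ?_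
    rintro _ ⟨B, hB, rfl⟩
    exact hρ B hB

end Model

end DynamicRegime

open DynamicRegime

theorem stmt0_general
    {Ω : Type*} [MeasurableSpace Ω] [StandardBorelSpace Ω]
    (P : Measure Ω) [IsProbabilityMeasure P]
    {p₁ p₂ : ℕ}
    (X₁ : Ω → (Fin p₁ → ℝ)) (A₁ : Ω → ℝ) (X₂ : Ω → (Fin p₂ → ℝ)) (A₂ : Ω → ℝ) (Y : Ω → ℝ)
    (X₂star : ℝ → Ω → (Fin p₂ → ℝ)) (Ystar : ℝ → ℝ → Ω → ℝ)
    (hX₁ : Measurable X₁) (hA₁ : Measurable A₁) (hX₂ : Measurable X₂)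
    (hA₂ : Measurable A₂) (hY : Measurable Y)
    (hX₂star : ∀ a₁, Measurable (X₂star a₁)) (hYstar : ∀ a₁ a₂, Measurable (Ystar a₁ a₂))
    -- (C1) consistency
    (hC1X : ∀ ω, X₂ ω = X₂star (A₁ ω) ω) (hC1Y : ∀ ω, Y ω = Ystar (A₁ ω) (A₂ ω) ω)
    -- (C2) sequential ignorability: `A_t ⫫ W ∣ H_t`, `t = 1, 2`
    (hC2₁ : CondIndepFun (MeasurableSpace.comap X₁ inferInstance) hX₁.comap_le
      A₁ (Wfun X₂star Ystar) P)
    (hC2₂ : CondIndepFun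
      (MeasurableSpace.comap (fun ω => (X₁ ω, A₁ ω, X₂ ω)) inferInstance)
      ((hX₁.prodMk (hA₁.prodMk hX₂)).comap_le)
      A₂ (Wfun X₂star Ystar) P)
    -- (C3) positivity
    (hC3 : ∃ ε > (0:ℝ), ∀ a ∈ ({-1, 1} : Set ℝ),
      (∀ᵐ ω ∂P,
        ε < (P[({ω' | A₁ ω' = a}).indicator (fun _ => (1:ℝ)) |
              MeasurableSpace.comap X₁ inferInstance]) ω ∧
        (P[({ω' | A₁ ω' = a}).indicator (fun _ => (1:ℝ)) |
              MeasurableSpace.comap X₁ inferInstance]) ω < 1 - ε) ∧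
      (∀ᵐ ω ∂P,
        ε < (P[({ω' | A₂ ω' = a}).indicator (fun _ => (1:ℝ)) |
              MeasurableSpace.comap (fun ω' => (X₁ ω', A₁ ω', X₂ ω')) inferInstance]) ω ∧
        (P[({ω' | A₂ ω' = a}).indicator (fun _ => (1:ℝ)) |
              MeasurableSpace.comap (fun ω' => (X₁ ω', A₁ ω', X₂ ω')) inferInstance]) ω
          < 1 - ε))
    -- `R(y; x₁, a₁, x₂, a₂) = pr(Y ≥ y | X₁ = x₁, A₁ = a₁, X₂ = x₂, A₂ = a₂)`:
    -- a jointly measurable version of the conditional probability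
    (R : ℝ → (Fin p₁ → ℝ) → ℝ → (Fin p₂ → ℝ) → ℝ → ℝ)
    (hR_meas : ∀ y a₁ a₂, Measurable (fun x : (Fin p₁ → ℝ) × (Fin p₂ → ℝ) => R y x.1 a₁ x.2 a₂))
    (hR_mem : ∀ y x₁ a₁ x₂ a₂, R y x₁ a₁ x₂ a₂ ∈ Icc (0:ℝ) 1)
    (hR : ∀ (y a₁ a₂ : ℝ), ∀ B : Set ((Fin p₁ → ℝ) × (Fin p₂ → ℝ)), MeasurableSet B →
      (P {ω | y ≤ Y ω ∧ (X₁ ω, X₂ ω) ∈ B ∧ A₁ ω = a₁ ∧ A₂ ω = a₂}).toReal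
        = ∫ ω in {ω | (X₁ ω, X₂ ω) ∈ B ∧ A₁ ω = a₁ ∧ A₂ ω = a₂},
            R y (X₁ ω) a₁ (X₂ ω) a₂ ∂P)
    (y : ℝ)
    (π₁ : (Fin p₁ → ℝ) → ℝ) (π₂ : (Fin p₁ → ℝ) × ℝ × (Fin p₂ → ℝ) → ℝ)
    (hπ₁ : Measurable π₁) (hπ₂ : Measurable π₂)
    (hπ₁v : ∀ x, π₁ x = 1 ∨ π₁ x = -1) (hπ₂v : ∀ x, π₂ x = 1 ∨ π₂ x = -1)
    -- `ρ a₁` is a version of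
    -- `x₁ ↦ E{ Σ_{a₂} 1{π₂(H₂)=a₂} R(y;X₁,a₁,X₂,a₂) ∣ X₁ = x₁, A₁ = a₁ }`
    (ρ : ℝ → (Fin p₁ → ℝ) → ℝ)
    (hρ_meas : ∀ a₁ ∈ ({-1, 1} : Set ℝ), Measurable (ρ a₁))
    (hρ : ∀ a₁ ∈ ({-1, 1} : Set ℝ), ∀ B : Set (Fin p₁ → ℝ), MeasurableSet B →
      ∫ ω in {ω | X₁ ω ∈ B ∧ A₁ ω = a₁},
          (∑ a₂ ∈ ({-1, 1} : Finset ℝ),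
            (if π₂ (X₁ ω, A₁ ω, X₂ ω) = a₂ then (1:ℝ) else 0) * R y (X₁ ω) a₁ (X₂ ω) a₂) ∂P
        = ∫ ω in {ω | X₁ ω ∈ B ∧ A₁ ω = a₁}, ρ a₁ (X₁ ω) ∂P) :
    (P {ω | y ≤ Ypi X₁ X₂star Ystar π₁ π₂ ω}).toReal
      = ∫ ω, (∑ a₁ ∈ ({-1, 1} : Finset ℝ),
          (if π₁ (X₁ ω) = a₁ then (1:ℝ) else 0) * ρ a₁ (X₁ ω)) ∂P := by
  obtain ⟨ε, hε, hC3⟩ := hC3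
  have regime_condExp : ∀ a₁ ∈ ({-1, 1} : Finset ℝ), P[fun ω => ∑ a₂ ∈ ({-1, 1} : Finset ℝ),
      (if π₂ (X₁ ω, a₁, X₂star a₁ ω) = a₂ then 1 else 0) * (if y ≤ Ystar a₁ a₂ ω then 1 else 0)
        | MeasurableSpace.comap X₁ inferInstance] =ᵐ[P] fun ω => ρ a₁ (X₁ ω) := by
    intro a₁ ha₁
    have ha₁' : a₁ ∈ ({-1, 1} : Set ℝ) := by simpa using ha₁
    exact condExp_regimeSurvival_ae_eq hX₁ hA₁ hX₂ hA₂ hY hX₂star hYstar hC1X hC1Y hC2₁ hC2₂ ha₁'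
      ((hC3 a₁ ha₁').1.mono fun ω h => hε.trans h.1)
      (fun a₂ ha₂ => (hC3 a₂ ha₂).2.mono fun ω h => hε.trans h.1)
      (hR_meas y) (hR_mem y) (hR y) hπ₂ (hρ_meas a₁ ha₁') (hρ a₁ ha₁')
  rw [← measureReal_def, ← integral_indicator_one
    (measurableSet_le measurable_const (measurable_Ypi hX₁ hX₂star hYstar hπ₁ hπ₂))]
  calc _ = ∫ ω, ∑ a₁ ∈ ({-1, 1} : Finset ℝ), (if π₁ (X₁ ω) = a₁ then 1 else 0) *
          ∑ a₂ ∈ ({-1, 1} : Finset ℝ), (if π₂ (X₁ ω, a₁, X₂star a₁ ω) = a₂ then 1 else 0) *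
            (if y ≤ Ystar a₁ a₂ ω then 1 else 0) ∂P :=
        integral_congr_ae (ae_of_all P (indicator_le_Ypi X₁ X₂star Ystar hπ₁v hπ₂v y))
    _ = _ := integral_sum_ite_mul_eq_of_condExp_ae_eq hX₁.comap_le _
        (p := fun a₁ ω => π₁ (X₁ ω) = a₁) (fun a₁ _ => ⟨_, hπ₁ (measurableSet_singleton a₁), rfl⟩)
        (fun a₁ _ => integrable_finsetSum _ fun a₂ _ =>
          integrable_regimeTerm hX₁ hX₂star hYstar hπ₂ a₁ a₂ y)
        regime_condExp

/-- under (C1)–(C3), for any `y ∈ ℝ` and any regime `π = (π₁, π₂)`,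
`pr{Y*(π) ≥ y} = E[ Σ_{a₁} 1{π₁(H₁)=a₁} E{ Σ_{a₂} 1{π₂(H₂)=a₂} R(y;X₁,a₁,X₂,a₂) ∣ X₁, A₁=a₁ } ]`,
where `ρ a₁` is a measurable version of the inner conditional expectation given
`X₁, A₁ = a₁`. -/
theorem stmt0
    {Ω : Type*} [MeasurableSpace Ω] [StandardBorelSpace Ω]
    (P : Measure Ω) [IsProbabilityMeasure P]
    {p₁ p₂ : ℕ}
    (X₁ : Ω → (Fin p₁ → ℝ)) (A₁ : Ω → ℝ) (X₂ : Ω → (Fin p₂ → ℝ)) (A₂ : Ω → ℝ) (Y : Ω → ℝ)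
    (X₂star : ℝ → Ω → (Fin p₂ → ℝ)) (Ystar : ℝ → ℝ → Ω → ℝ)
    (hX₁ : Measurable X₁) (hA₁ : Measurable A₁) (hX₂ : Measurable X₂)
    (hA₂ : Measurable A₂) (hY : Measurable Y)
    (hX₂star : ∀ a₁, Measurable (X₂star a₁)) (hYstar : ∀ a₁ a₂, Measurable (Ystar a₁ a₂))
    (hA₁v : ∀ ω, A₁ ω = 1 ∨ A₁ ω = -1) (hA₂v : ∀ ω, A₂ ω = 1 ∨ A₂ ω = -1)
    -- (C1) consistency
    (hC1X : ∀ ω, X₂ ω = X₂star (A₁ ω) ω) (hC1Y : ∀ ω, Y ω = Ystar (A₁ ω) (A₂ ω) ω)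
    -- (C2) sequential ignorability: `A_t ⫫ W ∣ H_t`, `t = 1, 2`
    (hC2₁ : CondIndepFun (MeasurableSpace.comap X₁ inferInstance) hX₁.comap_le
      A₁ (Wfun X₂star Ystar) P)
    (hC2₂ : CondIndepFun
      (MeasurableSpace.comap (fun ω => (X₁ ω, A₁ ω, X₂ ω)) inferInstance)
      ((hX₁.prodMk (hA₁.prodMk hX₂)).comap_le)
      A₂ (Wfun X₂star Ystar) P)
    -- (C3) positivity
    (hC3 : ∃ ε > (0:ℝ), ∀ a ∈ ({-1, 1} : Set ℝ),
      (∀ᵐ ω ∂P,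
        ε < (P[({ω' | A₁ ω' = a}).indicator (fun _ => (1:ℝ)) |
              MeasurableSpace.comap X₁ inferInstance]) ω ∧
        (P[({ω' | A₁ ω' = a}).indicator (fun _ => (1:ℝ)) |
              MeasurableSpace.comap X₁ inferInstance]) ω < 1 - ε) ∧
      (∀ᵐ ω ∂P,
        ε < (P[({ω' | A₂ ω' = a}).indicator (fun _ => (1:ℝ)) |
              MeasurableSpace.comap (fun ω' => (X₁ ω', A₁ ω', X₂ ω')) inferInstance]) ω ∧
        (P[({ω' | A₂ ω' = a}).indicator (fun _ => (1:ℝ)) |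
              MeasurableSpace.comap (fun ω' => (X₁ ω', A₁ ω', X₂ ω')) inferInstance]) ω
          < 1 - ε))
    -- `R(y; x₁, a₁, x₂, a₂) = pr(Y ≥ y | X₁ = x₁, A₁ = a₁, X₂ = x₂, A₂ = a₂)`:
    -- a jointly measurable version of the conditional probability
    (R : ℝ → (Fin p₁ → ℝ) → ℝ → (Fin p₂ → ℝ) → ℝ → ℝ)
    (hR_meas : ∀ y a₁ a₂, Measurable (fun x : (Fin p₁ → ℝ) × (Fin p₂ → ℝ) => R y x.1 a₁ x.2 a₂))
    (hR_mem : ∀ y x₁ a₁ x₂ a₂, R y x₁ a₁ x₂ a₂ ∈ Icc (0:ℝ) 1)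
    (hR : ∀ (y a₁ a₂ : ℝ), ∀ B : Set ((Fin p₁ → ℝ) × (Fin p₂ → ℝ)), MeasurableSet B →
      (P {ω | y ≤ Y ω ∧ (X₁ ω, X₂ ω) ∈ B ∧ A₁ ω = a₁ ∧ A₂ ω = a₂}).toReal
        = ∫ ω in {ω | (X₁ ω, X₂ ω) ∈ B ∧ A₁ ω = a₁ ∧ A₂ ω = a₂},
            R y (X₁ ω) a₁ (X₂ ω) a₂ ∂P)
    (y : ℝ)
    (π₁ : (Fin p₁ → ℝ) → ℝ) (π₂ : (Fin p₁ → ℝ) × ℝ × (Fin p₂ → ℝ) → ℝ)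
    (hπ₁ : Measurable π₁) (hπ₂ : Measurable π₂)
    (hπ₁v : ∀ x, π₁ x = 1 ∨ π₁ x = -1) (hπ₂v : ∀ x, π₂ x = 1 ∨ π₂ x = -1)
    -- `ρ a₁` is a version of
    -- `x₁ ↦ E{ Σ_{a₂} 1{π₂(H₂)=a₂} R(y;X₁,a₁,X₂,a₂) ∣ X₁ = x₁, A₁ = a₁ }`
    (ρ : ℝ → (Fin p₁ → ℝ) → ℝ)
    (hρ_meas : ∀ a₁ ∈ ({-1, 1} : Set ℝ), Measurable (ρ a₁))
    (hρ : ∀ a₁ ∈ ({-1, 1} : Set ℝ), ∀ B : Set (Fin p₁ → ℝ), MeasurableSet B →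
      ∫ ω in {ω | X₁ ω ∈ B ∧ A₁ ω = a₁},
          (∑ a₂ ∈ ({-1, 1} : Finset ℝ),
            (if π₂ (X₁ ω, A₁ ω, X₂ ω) = a₂ then (1:ℝ) else 0) * R y (X₁ ω) a₁ (X₂ ω) a₂) ∂P
        = ∫ ω in {ω | X₁ ω ∈ B ∧ A₁ ω = a₁}, ρ a₁ (X₁ ω) ∂P) :
    (P {ω | y ≤ Ypi X₁ X₂star Ystar π₁ π₂ ω}).toReal
      = ∫ ω, (∑ a₁ ∈ ({-1, 1} : Finset ℝ),
          (if π₁ (X₁ ω) = a₁ then (1:ℝ) else 0) * ρ a₁ (X₁ ω)) ∂P :=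
  stmt0_general P X₁ A₁ X₂ A₂ Y X₂star Ystar hX₁ hA₁ hX₂ hA₂ hY hX₂star hYstar hC1X hC1Y hC2₁ hC2₂
    hC3 R hR_meas hR_mem hR y π₁ π₂ hπ₁ hπ₂ hπ₁v hπ₂v ρ hρ_meas hρ
end
end

section
/- For every regime (π₁, π₂) and every y ∈ ℝ, pr^{(π₁,π₂)}(Y ≤ y) ≥ pr^{(π₁,π₂*)}(Y ≤ y), where π₂*(h₂) = sgn(c(h₂)); moreover pr^{(π₁,π₂*)}(Y ≤ y) = ∫_{𝒳₁} I(y, F_ε, G(·,· | h₁, π₁(h₁))) μ(dh₁). -/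
open MeasureTheory ProbabilityTheory Filter Set

noncomputable section

/-- sign function: `1` if `0 ≤ x`, `−1` otherwise. -/
def sgn (x : ℝ) : ℝ := if 0 ≤ x then 1 else -1

/-- `pr^π(Y ≤ y)`, the CDF of the outcome induced by the regime `(π₁, π₂)`:
`∫∫ F_ε(y − m(h₂) − π₂(h₂) c(h₂)) κ((h₁, π₁(h₁)), dh₂) μ(dh₁)`. -/
def prPi {X1 X2 : Type*} [MeasurableSpace X1] [MeasurableSpace X2]
    (μ : Measure X1) (κ : Kernel (X1 × ℝ) X2) (m c : X2 → ℝ) (Feps : ℝ → ℝ)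
    (π₁ : X1 → ℝ) (π₂ : X2 → ℝ) (y : ℝ) : ℝ :=
  ∫ h₁, (∫ h₂, Feps (y - m h₂ - π₂ h₂ * c h₂) ∂(κ (h₁, π₁ h₁))) ∂μ

/-- `I(y, F, G) = ∫ F(y − u − |v|) dG(u,v)`. -/
def Ifun (y : ℝ) (F : ℝ → ℝ) (G : Measure (ℝ × ℝ)) : ℝ :=
  ∫ p, F (y - p.1 - |p.2|) ∂G

/-- `G(·,· | h₁, a₁)`: the pushforward of `κ((h₁,a₁),·)` under `h₂ ↦ (m h₂, c h₂)`. -/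
def Gdist {X1 X2 : Type*} [MeasurableSpace X1] [MeasurableSpace X2]
    (κ : Kernel (X1 × ℝ) X2) (m c : X2 → ℝ) (h₁ : X1) (a₁ : ℝ) : Measure (ℝ × ℝ) :=
  (κ (h₁, a₁)).map (fun h₂ => (m h₂, c h₂))

/-- `d(h₁, y) = I(y, F_ε, G(·,·|h₁,−1)) − I(y, F_ε, G(·,·|h₁,1))`. -/
def dfun {X1 X2 : Type*} [MeasurableSpace X1] [MeasurableSpace X2]
    (κ : Kernel (X1 × ℝ) X2) (m c : X2 → ℝ) (Feps : ℝ → ℝ) (h₁ : X1) (y : ℝ) : ℝ :=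
  Ifun y Feps (Gdist κ m c h₁ (-1)) - Ifun y Feps (Gdist κ m c h₁ 1)

/-- `Γ(h₁, y) = sgn(d(h₁, y))`. -/
def Gam {X1 X2 : Type*} [MeasurableSpace X1] [MeasurableSpace X2]
    (κ : Kernel (X1 × ℝ) X2) (m c : X2 → ℝ) (Feps : ℝ → ℝ) (h₁ : X1) (y : ℝ) : ℝ :=
  sgn (dfun κ m c Feps h₁ y)

/-- `q^π(τ) = inf{y : pr^π(Y ≤ y) ≥ τ}`. -/
def quant {X1 X2 : Type*} [MeasurableSpace X1] [MeasurableSpace X2]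
    (μ : Measure X1) (κ : Kernel (X1 × ℝ) X2) (m c : X2 → ℝ) (Feps : ℝ → ℝ)
    (τ : ℝ) (π₁ : X1 → ℝ) (π₂ : X2 → ℝ) : ℝ :=
  sInf {y : ℝ | τ ≤ prPi μ κ m c Feps π₁ π₂ y}

/-- `y*_τ = inf{y : pr^{(Γ(·,y), π₂*)}(Y ≤ y) ≥ τ}` where `π₂*(h₂) = sgn(c(h₂))`. -/
def ystar {X1 X2 : Type*} [MeasurableSpace X1] [MeasurableSpace X2]
    (μ : Measure X1) (κ : Kernel (X1 × ℝ) X2) (m c : X2 → ℝ) (Feps : ℝ → ℝ)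
    (τ : ℝ) : ℝ :=
  sInf {y : ℝ |
    τ ≤ prPi μ κ m c Feps (fun h₁ => Gam κ m c Feps h₁ y) (fun h₂ => sgn (c h₂)) y}

/-- `f(y) = q^{(Γ(·,y), π₂*)}(τ)`. -/
def fQIQ {X1 X2 : Type*} [MeasurableSpace X1] [MeasurableSpace X2]
    (μ : Measure X1) (κ : Kernel (X1 × ℝ) X2) (m c : X2 → ℝ) (Feps : ℝ → ℝ)
    (τ : ℝ) (y : ℝ) : ℝ :=
  quant μ κ m c Feps τ (fun h₁ => Gam κ m c Feps h₁ y) (fun h₂ => sgn (c h₂))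

/-- for every regime `(π₁, π₂)` and every `y`,
`pr^{(π₁,π₂)}(Y ≤ y) ≥ pr^{(π₁,π₂*)}(Y ≤ y)` with `π₂*(h₂) = sgn(c(h₂))`; moreover
`pr^{(π₁,π₂*)}(Y ≤ y) = ∫ I(y, F_ε, G(·,·|h₁, π₁(h₁))) μ(dh₁)`. -/
theorem stmt3
    {X1 X2 : Type*} [MeasurableSpace X1] [MeasurableSpace X2]
    [StandardBorelSpace X1] [StandardBorelSpace X2]
    (μ : Measure X1) [IsProbabilityMeasure μ]
    (κ : Kernel (X1 × ℝ) X2) [IsMarkovKernel κ]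
    (m c : X2 → ℝ) (hm : Measurable m) (hc : Measurable c)
    (Feps : ℝ → ℝ) (hF_mono : Monotone Feps)
    (hF_rc : ∀ x : ℝ, ContinuousWithinAt Feps (Ici x) x)
    (hF_bot : Tendsto Feps atBot (nhds 0)) (hF_top : Tendsto Feps atTop (nhds 1))
    (hF_mem : ∀ x : ℝ, Feps x ∈ Icc (0:ℝ) 1)
    (π₁ : X1 → ℝ) (π₂ : X2 → ℝ) (hπ₁ : Measurable π₁) (hπ₂ : Measurable π₂)
    (hπ₁v : ∀ h₁, π₁ h₁ = 1 ∨ π₁ h₁ = -1) (hπ₂v : ∀ h₂, π₂ h₂ = 1 ∨ π₂ h₂ = -1)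
    (y : ℝ) :
    prPi μ κ m c Feps π₁ (fun h₂ => sgn (c h₂)) y ≤ prPi μ κ m c Feps π₁ π₂ y ∧
    prPi μ κ m c Feps π₁ (fun h₂ => sgn (c h₂)) y
      = ∫ h₁, Ifun y Feps (Gdist κ m c h₁ (π₁ h₁)) ∂μ := by
  have hFmeas : Measurable Feps := hF_mono.measurable
  have hFb : ∀ x, |Feps x| ≤ 1 := fun x => by
    rcases hF_mem x with ⟨h0, h1⟩; rw [abs_le]; constructor <;> linarith
  have hsgn : ∀ h₂, sgn (c h₂) * c h₂ = |c h₂| := by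
    intro h₂; unfold sgn; split_ifs with h
    · simp [abs_of_nonneg h]
    · rw [abs_of_neg (lt_of_not_ge h)]; ring
  -- integrability helper
  have hinteg : ∀ (π : X2 → ℝ), Measurable π → ∀ p : X1 × ℝ,
      Integrable (fun h₂ => Feps (y - m h₂ - π h₂ * c h₂)) (κ p) := by
    intro π hπ p
    refine Integrable.mono' (integrable_const 1)
      (hFmeas.comp ((measurable_const.sub hm).sub (hπ.mul hc))).aestronglyMeasurable
      (ae_of_all _ fun x => ?_)
    simpa using hFb _
  have habs : Measurable (fun h₂ => |c h₂|) := hc.abs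
  have hintabs : ∀ p : X1 × ℝ,
      Integrable (fun h₂ => Feps (y - m h₂ - |c h₂|)) (κ p) := by
    intro p
    refine Integrable.mono' (integrable_const 1)
      (hFmeas.comp ((measurable_const.sub hm).sub habs)).aestronglyMeasurable
      (ae_of_all _ fun x => ?_)
    simpa using hFb _
  have hsgnmeas : Measurable (fun h₂ => sgn (c h₂)) := by
    unfold sgn
    exact Measurable.ite (measurableSet_le measurable_const hc) measurable_const
      measurable_const
  -- inner integral with π₂* rewrites as abs
  have hstar : ∀ p : X1 × ℝ,
      (∫ h₂, Feps (y - m h₂ - sgn (c h₂) * c h₂) ∂(κ p))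
        = ∫ h₂, Feps (y - m h₂ - |c h₂|) ∂(κ p) := by
    intro p; congr 1; funext h₂; rw [hsgn]
  -- measurability of outer integrands
  have hmeasout : ∀ (g : X2 → ℝ), Measurable g →
      Measurable (fun h₁ : X1 => ∫ h₂, g h₂ ∂(κ (h₁, π₁ h₁))) := by
    intro g hg
    have h1 : StronglyMeasurable (fun p : X1 × ℝ => ∫ h₂, g h₂ ∂(κ p)) :=
      StronglyMeasurable.integral_kernel_prod_right'
        (hg.comp measurable_snd).stronglyMeasurable
    exact h1.measurable.comp (measurable_id.prodMk hπ₁)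
  have houtbd : ∀ (g : X2 → ℝ), (∀ x, |g x| ≤ 1) →
      ∀ h₁ : X1, |∫ h₂, g h₂ ∂(κ (h₁, π₁ h₁))| ≤ 1 := by
    intro g hg h₁
    calc |∫ h₂, g h₂ ∂(κ (h₁, π₁ h₁))| ≤ ∫ h₂, |g h₂| ∂(κ (h₁, π₁ h₁)) :=
          by simpa [Real.norm_eq_abs] using
            norm_integral_le_integral_norm (μ := κ (h₁, π₁ h₁)) g
      _ ≤ ∫ _, (1:ℝ) ∂(κ (h₁, π₁ h₁)) := by
          refine integral_mono_of_nonneg (ae_of_all _ fun x => abs_nonneg _)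
            (integrable_const 1) (ae_of_all _ hg)
      _ = 1 := by simp
  have houtinteg : ∀ (g : X2 → ℝ), Measurable g → (∀ x, |g x| ≤ 1) →
      Integrable (fun h₁ : X1 => ∫ h₂, g h₂ ∂(κ (h₁, π₁ h₁))) μ := by
    intro g hg hb
    refine Integrable.mono' (integrable_const 1)
      (hmeasout g hg).aestronglyMeasurable (ae_of_all _ fun h₁ => ?_)
    simpa using houtbd g hb h₁
  constructor
  · -- inequality
    have hgb : ∀ x, |Feps (y - m x - sgn (c x) * c x)| ≤ 1 := fun x => hFb _
    have hgb2 : ∀ x, |Feps (y - m x - π₂ x * c x)| ≤ 1 := fun x => hFb _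
    refine integral_mono
      (houtinteg _ (hFmeas.comp ((measurable_const.sub hm).sub (hsgnmeas.mul hc))) hgb)
      (houtinteg _ (hFmeas.comp ((measurable_const.sub hm).sub (hπ₂.mul hc))) hgb2)
      (fun h₁ => ?_)
    refine integral_mono (hinteg _ hsgnmeas _) (hinteg _ hπ₂ _) (fun h₂ => ?_)
    apply hF_mono
    have : π₂ h₂ * c h₂ ≤ |c h₂| := by
      rcases hπ₂v h₂ with h | h <;> rw [h]
      · simpa using le_abs_self (c h₂)
      · nlinarith [neg_abs_le (c h₂)]
    rw [hsgn]; linarith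
  · -- identity
    unfold prPi
    refine integral_congr_ae (ae_of_all _ fun h₁ => ?_)
    simp only
    rw [hstar]
    unfold Ifun Gdist
    rw [integral_map (hm.prodMk hc).aemeasurable]
    exact (hFmeas.comp ((measurable_const.sub measurable_fst).sub
      measurable_snd.abs)).aestronglyMeasurable
end
end

section
/- Fix λ ∈ ℝ. The regime (Γ(·, λ), π₂*) is λ-optimal: for every regime π = (π₁, π₂), pr^{(Γ(·,λ), π₂*)}(Y > λ) ≥ pr^π(Y > λ). -/
open MeasureTheory ProbabilityTheory Filter Set

noncomputable section

lemma sgn_mul_self' (x : ℝ) : sgn x * x = |x| := by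
  unfold sgn
  rcases le_or_gt 0 x with h | h
  · simp [h, abs_of_nonneg h]
  · simp [not_le.mpr h, abs_of_neg h]

/-- fix `λ`. The regime `(Γ(·,λ), π₂*)` is `λ`-optimal: for every regime
`π = (π₁, π₂)`, `pr^{(Γ(·,λ), π₂*)}(Y > λ) ≥ pr^π(Y > λ)`. -/
theorem stmt4
    {X1 X2 : Type*} [MeasurableSpace X1] [MeasurableSpace X2]
    [StandardBorelSpace X1] [StandardBorelSpace X2]
    (μ : Measure X1) [IsProbabilityMeasure μ]
    (κ : Kernel (X1 × ℝ) X2) [IsMarkovKernel κ]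
    (m c : X2 → ℝ) (hm : Measurable m) (hc : Measurable c)
    (Feps : ℝ → ℝ) (hF_mono : Monotone Feps)
    (hF_rc : ∀ x : ℝ, ContinuousWithinAt Feps (Ici x) x)
    (hF_bot : Tendsto Feps atBot (nhds 0)) (hF_top : Tendsto Feps atTop (nhds 1))
    (hF_mem : ∀ x : ℝ, Feps x ∈ Icc (0:ℝ) 1)
    (lam : ℝ)
    (π₁ : X1 → ℝ) (π₂ : X2 → ℝ) (hπ₁ : Measurable π₁) (hπ₂ : Measurable π₂)
    (hπ₁v : ∀ h₁, π₁ h₁ = 1 ∨ π₁ h₁ = -1) (hπ₂v : ∀ h₂, π₂ h₂ = 1 ∨ π₂ h₂ = -1) :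
    1 - prPi μ κ m c Feps π₁ π₂ lam
      ≤ 1 - prPi μ κ m c Feps (fun h₁ => Gam κ m c Feps h₁ lam) (fun h₂ => sgn (c h₂)) lam := by
  have hFmeas : Measurable Feps := hF_mono.measurable
  -- inner integrand measurability for a generic second-stage rule
  have hmeas2 : ∀ (p2 : X2 → ℝ), Measurable p2 →
      Measurable fun h₂ => Feps (lam - m h₂ - p2 h₂ * c h₂) := fun p2 hp2 =>
    hFmeas.comp ((measurable_const.sub hm).sub (hp2.mul hc))
  have hsgn : Measurable sgn := by
    unfold sgn
    exact Measurable.ite measurableSet_Ici measurable_const measurable_const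
  -- identification of Ifun with the inner integral for the optimal second-stage rule
  have hinner : ∀ (h₁ : X1) (a₁ : ℝ),
      Ifun lam Feps (Gdist κ m c h₁ a₁)
        = ∫ h₂, Feps (lam - m h₂ - sgn (c h₂) * c h₂) ∂(κ (h₁, a₁)) := by
    intro h₁ a₁
    have hmeasP : Measurable fun p : ℝ × ℝ => Feps (lam - p.1 - |p.2|) :=
      hFmeas.comp ((measurable_const.sub measurable_fst).sub measurable_snd.abs)
    unfold Ifun Gdist
    rw [integral_map (hm.prodMk hc).aemeasurable hmeasP.aestronglyMeasurable]
    refine integral_congr_ae (Filter.Eventually.of_forall fun h₂ => ?_)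
    simp only [sgn_mul_self']
  -- boundedness / integrability of inner integrands
  have hbound : ∀ x : ℝ, ‖Feps x‖ ≤ 1 := fun x => by
    rcases hF_mem x with ⟨h0, h1⟩
    rw [Real.norm_eq_abs, abs_of_nonneg h0]; exact h1
  have hint2 : ∀ (p2 : X2 → ℝ), Measurable p2 → ∀ (q : X1 × ℝ),
      Integrable (fun h₂ => Feps (lam - m h₂ - p2 h₂ * c h₂)) (κ q) := by
    intro p2 hp2 q
    refine Integrable.mono' (integrable_const 1) ((hmeas2 p2 hp2).aestronglyMeasurable)
      (Filter.Eventually.of_forall fun h₂ => hbound _)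
  -- pointwise (in h₁) comparison of inner integrals
  have hpt : ∀ h₁ : X1,
      (∫ h₂, Feps (lam - m h₂ - sgn (c h₂) * c h₂) ∂(κ (h₁, Gam κ m c Feps h₁ lam)))
        ≤ ∫ h₂, Feps (lam - m h₂ - π₂ h₂ * c h₂) ∂(κ (h₁, π₁ h₁)) := by
    intro h₁
    have step1 : (∫ h₂, Feps (lam - m h₂ - sgn (c h₂) * c h₂) ∂(κ (h₁, Gam κ m c Feps h₁ lam)))
        ≤ ∫ h₂, Feps (lam - m h₂ - sgn (c h₂) * c h₂) ∂(κ (h₁, π₁ h₁)) := by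
      rw [← hinner, ← hinner]
      unfold Gam sgn
      rcases le_or_gt 0 (dfun κ m c Feps h₁ lam) with hd | hd
      · rw [if_pos hd]
        have h1 : Ifun lam Feps (Gdist κ m c h₁ 1) ≤ Ifun lam Feps (Gdist κ m c h₁ (-1)) := by
          have := hd; unfold dfun at this; linarith
        rcases hπ₁v h₁ with h | h <;> rw [h] <;> exact h1
      · rw [if_neg (not_le.mpr hd)]
        have h1 : Ifun lam Feps (Gdist κ m c h₁ (-1)) ≤ Ifun lam Feps (Gdist κ m c h₁ 1) := by
          have := hd; unfold dfun at this; linarith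
        rcases hπ₁v h₁ with h | h <;> rw [h] <;> exact h1
    have step2 : (∫ h₂, Feps (lam - m h₂ - sgn (c h₂) * c h₂) ∂(κ (h₁, π₁ h₁)))
        ≤ ∫ h₂, Feps (lam - m h₂ - π₂ h₂ * c h₂) ∂(κ (h₁, π₁ h₁)) := by
      refine integral_mono (hint2 _ (hsgn.comp hc) _) (hint2 _ hπ₂ _) fun h₂ => ?_
      refine hF_mono (by
        have h1 : π₂ h₂ * c h₂ ≤ |c h₂| := by
          rcases hπ₂v h₂ with h | h <;> rw [h]
          · rw [one_mul]; exact le_abs_self _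
          · rw [neg_one_mul]; exact neg_le_abs _
        rw [sgn_mul_self']
        linarith)
    exact step1.trans step2
    -- fix neg_abs case separately if needed
  -- outer integrand (π side) is integrable
  have hsm : StronglyMeasurable fun q : (X1 × ℝ) × X2 =>
      Feps (lam - m q.2 - π₂ q.2 * c q.2) :=
    ((hmeas2 π₂ hπ₂).comp measurable_snd).stronglyMeasurable
  have houter_meas : Measurable fun h₁ =>
      ∫ h₂, Feps (lam - m h₂ - π₂ h₂ * c h₂) ∂(κ (h₁, π₁ h₁)) := by
    have := hsm.integral_kernel_prod_right' (κ := κ)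
    exact this.measurable.comp (measurable_id.prodMk hπ₁)
  have houter_int : Integrable (fun h₁ =>
      ∫ h₂, Feps (lam - m h₂ - π₂ h₂ * c h₂) ∂(κ (h₁, π₁ h₁))) μ := by
    refine Integrable.mono' (integrable_const 1) houter_meas.aestronglyMeasurable
      (Filter.Eventually.of_forall fun h₁ => ?_)
    rw [Real.norm_eq_abs, abs_le]
    constructor
    · refine le_trans (by norm_num) (integral_nonneg fun h₂ => (hF_mem _).1)
    · calc (∫ h₂, Feps (lam - m h₂ - π₂ h₂ * c h₂) ∂(κ (h₁, π₁ h₁)))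
          ≤ ∫ _, (1 : ℝ) ∂(κ (h₁, π₁ h₁)) :=
            integral_mono (hint2 _ hπ₂ _) (integrable_const 1) fun h₂ => (hF_mem _).2
        _ = 1 := by simp
  have key : prPi μ κ m c Feps (fun h₁ => Gam κ m c Feps h₁ lam) (fun h₂ => sgn (c h₂)) lam
      ≤ prPi μ κ m c Feps π₁ π₂ lam := by
    unfold prPi
    refine integral_mono_of_nonneg (Filter.Eventually.of_forall fun h₁ => ?_) houter_int
      (Filter.Eventually.of_forall fun h₁ => hpt h₁)
    exact integral_nonneg fun h₂ => (hF_mem _).1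
  linarith
end
end

section
/- Fix λ ∈ ℝ. For every measurable π₁ : 𝒳₁ → {−1,1}, pr^{(π₁, π₂*)}(Y > λ) ≤ 1 − ∫_{𝒳₁} min_{a₁∈{−1,1}} I(λ, F_ε, G(·,· | h₁, a₁)) μ(dh₁), and equality holds when π₁ = Γ(·, λ); in particular, for every h₁, I(λ, F_ε, G(·,· | h₁, Γ(h₁, λ))) = min_{a₁∈{−1,1}} I(λ, F_ε, G(·,· | h₁, a₁)). -/
open MeasureTheory ProbabilityTheory Filter Set

noncomputable section

lemma Ifun_eq {X1 X2 : Type*} [MeasurableSpace X1] [MeasurableSpace X2]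
    (κ : Kernel (X1 × ℝ) X2)
    (m c : X2 → ℝ) (hm : Measurable m) (hc : Measurable c)
    (Feps : ℝ → ℝ) (hF_mono : Monotone Feps) (lam : ℝ) (h₁ : X1) (a : ℝ) :
    Ifun lam Feps (Gdist κ m c h₁ a)
      = ∫ h₂, Feps (lam - m h₂ - |c h₂|) ∂(κ (h₁, a)) := by
  have hFm : Measurable Feps := hF_mono.measurable
  rw [Ifun, Gdist, integral_map (hm.prodMk hc).aemeasurable]
  exact (hFm.comp ((measurable_const.sub measurable_fst).sub measurable_snd.abs)).aestronglyMeasurable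

lemma sgn_mul_abs (x : ℝ) : x - sgn x * x = x - |x| := by
  unfold sgn; split_ifs with h
  · rw [abs_of_nonneg h, one_mul]
  · rw [abs_of_neg (lt_of_not_ge h)]; ring

lemma Ifun_Gam_eq {X1 X2 : Type*} [MeasurableSpace X1] [MeasurableSpace X2]
    (κ : Kernel (X1 × ℝ) X2) (m c : X2 → ℝ) (Feps : ℝ → ℝ) (lam : ℝ) (h₁ : X1) :
    Ifun lam Feps (Gdist κ m c h₁ (Gam κ m c Feps h₁ lam))
      = min (Ifun lam Feps (Gdist κ m c h₁ (-1))) (Ifun lam Feps (Gdist κ m c h₁ 1)) := by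
  unfold Gam sgn dfun
  split_ifs with h
  · rw [min_eq_right (by linarith)]
  · rw [min_eq_left (by linarith)]

/-- fix `λ`. For every measurable `π₁ : 𝒳₁ → {−1,1}`,
`pr^{(π₁, π₂*)}(Y > λ) ≤ 1 − ∫ min_{a₁∈{−1,1}} I(λ, F_ε, G(·,·|h₁,a₁)) μ(dh₁)`,
with equality when `π₁ = Γ(·, λ)`; in particular for every `h₁`,
`I(λ, F_ε, G(·,·|h₁, Γ(h₁,λ))) = min_{a₁∈{−1,1}} I(λ, F_ε, G(·,·|h₁,a₁))`. -/
theorem stmt5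
    {X1 X2 : Type*} [MeasurableSpace X1] [MeasurableSpace X2]
    [StandardBorelSpace X1] [StandardBorelSpace X2]
    (μ : Measure X1) [IsProbabilityMeasure μ]
    (κ : Kernel (X1 × ℝ) X2) [IsMarkovKernel κ]
    (m c : X2 → ℝ) (hm : Measurable m) (hc : Measurable c)
    (Feps : ℝ → ℝ) (hF_mono : Monotone Feps)
    (hF_rc : ∀ x : ℝ, ContinuousWithinAt Feps (Ici x) x)
    (hF_bot : Tendsto Feps atBot (nhds 0)) (hF_top : Tendsto Feps atTop (nhds 1))
    (hF_mem : ∀ x : ℝ, Feps x ∈ Icc (0:ℝ) 1)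
    (lam : ℝ)
    (π₁ : X1 → ℝ) (hπ₁ : Measurable π₁) (hπ₁v : ∀ h₁, π₁ h₁ = 1 ∨ π₁ h₁ = -1) :
    (1 - prPi μ κ m c Feps π₁ (fun h₂ => sgn (c h₂)) lam
      ≤ 1 - ∫ h₁, min (Ifun lam Feps (Gdist κ m c h₁ (-1))) (Ifun lam Feps (Gdist κ m c h₁ 1)) ∂μ) ∧
    (1 - prPi μ κ m c Feps (fun h₁ => Gam κ m c Feps h₁ lam) (fun h₂ => sgn (c h₂)) lam
      = 1 - ∫ h₁, min (Ifun lam Feps (Gdist κ m c h₁ (-1))) (Ifun lam Feps (Gdist κ m c h₁ 1)) ∂μ) ∧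
    (∀ h₁ : X1, Ifun lam Feps (Gdist κ m c h₁ (Gam κ m c Feps h₁ lam))
      = min (Ifun lam Feps (Gdist κ m c h₁ (-1))) (Ifun lam Feps (Gdist κ m c h₁ 1))) := by
  have hFm : Measurable Feps := hF_mono.measurable
  -- the integrand as function of h₂
  set f : X2 → ℝ := fun h₂ => Feps (lam - m h₂ - |c h₂|) with hf
  have hfmeas : Measurable f :=
    hFm.comp ((measurable_const.sub hm).sub hc.abs)
  -- prPi with π₂* rewrites
  have hpr : ∀ p : X1 → ℝ, prPi μ κ m c Feps p (fun h₂ => sgn (c h₂)) lam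
      = ∫ h₁, (∫ h₂, f h₂ ∂(κ (h₁, p h₁))) ∂μ := by
    intro p
    unfold prPi
    congr 1; funext h₁; congr 1; funext h₂
    rw [hf]
    congr 1
    have := sgn_mul_abs (c h₂)
    linarith
  -- measurability of kernel integrals
  have hmeasK : Measurable fun q : X1 × ℝ => ∫ h₂, f h₂ ∂(κ q) := by
    have : StronglyMeasurable fun q : (X1 × ℝ) × X2 => f q.2 :=
      (hfmeas.comp measurable_snd).stronglyMeasurable
    exact this.integral_kernel_prod_right'.measurable
  have hbound : ∀ q : X1 × ℝ, ∫ h₂, f h₂ ∂(κ q) ∈ Icc (0:ℝ) 1 := by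
    intro q
    constructor
    · exact integral_nonneg fun h₂ => (hF_mem _).1
    · calc ∫ h₂, f h₂ ∂(κ q) ≤ ∫ _, (1:ℝ) ∂(κ q) := by
            refine integral_mono_of_nonneg (Eventually.of_forall fun h₂ => (hF_mem _).1)
              (integrable_const 1) (Eventually.of_forall fun h₂ => (hF_mem _).2)
      _ = 1 := by simp
  have hInt : ∀ p : X1 → ℝ, Measurable p →
      Integrable (fun h₁ => ∫ h₂, f h₂ ∂(κ (h₁, p h₁))) μ := by
    intro p hp
    have hmeas : Measurable fun h₁ => ∫ h₂, f h₂ ∂(κ (h₁, p h₁)) :=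
      hmeasK.comp (measurable_id.prodMk hp)
    refine Integrable.mono' (integrable_const 1) hmeas.aestronglyMeasurable ?_
    refine Eventually.of_forall fun h₁ => ?_
    rw [Real.norm_eq_abs, abs_of_nonneg (hbound _).1]
    exact (hbound _).2
  -- rewrite Ifun as kernel integral
  have hI : ∀ (h₁ : X1) (a : ℝ),
      Ifun lam Feps (Gdist κ m c h₁ a) = ∫ h₂, f h₂ ∂(κ (h₁, a)) :=
    fun h₁ a => Ifun_eq κ m c hm hc Feps hF_mono lam h₁ a
  have hGamEq := fun h₁ => Ifun_Gam_eq κ m c Feps lam h₁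
  have hmin_int : Integrable (fun h₁ =>
      min (Ifun lam Feps (Gdist κ m c h₁ (-1))) (Ifun lam Feps (Gdist κ m c h₁ 1))) μ := by
    have : (fun h₁ => min (Ifun lam Feps (Gdist κ m c h₁ (-1))) (Ifun lam Feps (Gdist κ m c h₁ 1)))
        = fun h₁ => min (∫ h₂, f h₂ ∂(κ (h₁, -1))) (∫ h₂, f h₂ ∂(κ (h₁, 1))) := by
      funext h₁; rw [hI, hI]
    rw [this]
    exact Integrable.inf (hInt _ measurable_const) (hInt _ measurable_const)
  have hGamMeas : Measurable fun h₁ => Gam κ m c Feps h₁ lam := by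
    unfold Gam sgn dfun
    refine Measurable.ite (measurableSet_le measurable_const ?_) measurable_const measurable_const
    have h1 : Measurable fun h₁ => Ifun lam Feps (Gdist κ m c h₁ (-1)) := by
      simp only [hI]; exact hmeasK.comp (measurable_id.prodMk measurable_const)
    have h2 : Measurable fun h₁ => Ifun lam Feps (Gdist κ m c h₁ 1) := by
      simp only [hI]; exact hmeasK.comp (measurable_id.prodMk measurable_const)
    exact h1.sub h2
  refine ⟨?_, ?_, hGamEq⟩
  · -- inequality
    rw [hpr]
    gcongr 1 - ?_
    refine integral_mono hmin_int (hInt π₁ hπ₁) fun h₁ => ?_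
    rcases hπ₁v h₁ with h | h <;> rw [h]
    · rw [← hI]; exact min_le_right _ _
    · rw [← hI]; exact min_le_left _ _
  · -- equality
    rw [hpr]
    congr 1
    refine integral_congr_ae (Eventually.of_forall fun h₁ => ?_)
    simp only
    rw [← hI h₁ (Gam κ m c Feps h₁ lam), hGamEq h₁]
end
end

section
/- Fix τ ∈ (0,1). If F_ε is continuous and strictly increasing, then f(y*_τ) = y*_τ. -/
open MeasureTheory ProbabilityTheory Filter Set

noncomputable section

section AuxQIQ

variable {α : Type*} [MeasurableSpace α]

lemma aux_integrable_of_Icc (ν : Measure α) [IsFiniteMeasure ν] {f : α → ℝ}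
    (hf : AEStronglyMeasurable f ν) (h : ∀ x, f x ∈ Icc (0:ℝ) 1) : Integrable f ν :=
  (integrable_const (1:ℝ)).mono' hf (Filter.Eventually.of_forall fun x => by
    rw [Real.norm_eq_abs, abs_of_nonneg (h x).1]; exact (h x).2)

lemma aux_integral_strict (ν : Measure α) [IsProbabilityMeasure ν] {f g : α → ℝ}
    (hf : Integrable f ν) (hg : Integrable g ν) (h : ∀ x, f x < g x) :
    ∫ x, f x ∂ν < ∫ x, g x ∂ν := by
  have h0 : 0 < ∫ x, (g x - f x) ∂ν := by
    rw [MeasureTheory.integral_pos_iff_support_of_nonneg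
      (fun x => sub_nonneg.2 (h x).le) (hg.sub hf)]
    have hs : Function.support (fun x => g x - f x) = Set.univ :=
      Set.eq_univ_of_forall fun x => sub_ne_zero.2 (h x).ne'
    rw [hs]
    simp
  rw [integral_sub hg hf] at h0
  linarith

variable (ν : Measure α) [IsProbabilityMeasure ν]
    {Feps : ℝ → ℝ} {w : α → ℝ}

lemma aux_J_meas (hF_cont : Continuous Feps) (hw : Measurable w) (y : ℝ) :
    AEStronglyMeasurable (fun x => Feps (y - w x)) ν :=
  (hF_cont.measurable.comp (measurable_const.sub hw)).aestronglyMeasurable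

lemma aux_J_int (hF_mem : ∀ x : ℝ, Feps x ∈ Icc (0:ℝ) 1) (hF_cont : Continuous Feps)
    (hw : Measurable w) (y : ℝ) : Integrable (fun x => Feps (y - w x)) ν :=
  aux_integrable_of_Icc ν (aux_J_meas ν hF_cont hw y) fun x => hF_mem _

lemma aux_J_mem (hF_mem : ∀ x : ℝ, Feps x ∈ Icc (0:ℝ) 1) (hF_cont : Continuous Feps)
    (hw : Measurable w) (y : ℝ) : (∫ x, Feps (y - w x) ∂ν) ∈ Icc (0:ℝ) 1 := by
  constructor
  · exact integral_nonneg fun x => (hF_mem _).1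
  · calc (∫ x, Feps (y - w x) ∂ν) ≤ ∫ _x, (1:ℝ) ∂ν :=
        integral_mono (aux_J_int ν hF_mem hF_cont hw y) (integrable_const 1)
          (fun x => (hF_mem _).2)
      _ = 1 := by simp

lemma aux_J_mono (hF_mem : ∀ x : ℝ, Feps x ∈ Icc (0:ℝ) 1) (hF_cont : Continuous Feps)
    (hF_mono : Monotone Feps) (hw : Measurable w) :
    Monotone (fun y => ∫ x, Feps (y - w x) ∂ν) := fun y y' hyy' =>
  integral_mono (aux_J_int ν hF_mem hF_cont hw y) (aux_J_int ν hF_mem hF_cont hw y')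
    (fun x => hF_mono (by linarith))

lemma aux_J_strict (hF_mem : ∀ x : ℝ, Feps x ∈ Icc (0:ℝ) 1) (hF_cont : Continuous Feps)
    (hF_strict : StrictMono Feps) (hw : Measurable w) :
    StrictMono (fun y => ∫ x, Feps (y - w x) ∂ν) := fun y y' hyy' =>
  aux_integral_strict ν (aux_J_int ν hF_mem hF_cont hw y) (aux_J_int ν hF_mem hF_cont hw y')
    (fun x => hF_strict (by linarith))

lemma aux_J_cont (hF_mem : ∀ x : ℝ, Feps x ∈ Icc (0:ℝ) 1) (hF_cont : Continuous Feps)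
    (hw : Measurable w) : Continuous (fun y => ∫ x, Feps (y - w x) ∂ν) := by
  refine continuous_of_dominated (fun y => aux_J_meas ν hF_cont hw y)
    (fun y => Filter.Eventually.of_forall fun x => ?_) (integrable_const (1:ℝ))
    (Filter.Eventually.of_forall fun x => hF_cont.comp (continuous_id.sub continuous_const))
  rw [Real.norm_eq_abs, abs_of_nonneg (hF_mem _).1]; exact (hF_mem _).2

lemma aux_J_top (hF_mem : ∀ x : ℝ, Feps x ∈ Icc (0:ℝ) 1) (hF_cont : Continuous Feps)
    (hF_top : Tendsto Feps atTop (nhds 1)) (hw : Measurable w) :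
    Tendsto (fun n : ℕ => ∫ x, Feps ((n : ℝ) - w x) ∂ν) atTop (nhds 1) := by
  have h := MeasureTheory.tendsto_integral_of_dominated_convergence
    (F := fun (n : ℕ) x => Feps ((n : ℝ) - w x)) (f := fun _ => (1:ℝ)) (μ := ν)
    (fun _ => (1:ℝ)) (fun n => aux_J_meas ν hF_cont hw _) (integrable_const 1)
    (fun n => Filter.Eventually.of_forall fun x => by
      rw [Real.norm_eq_abs, abs_of_nonneg (hF_mem _).1]; exact (hF_mem _).2)
    (Filter.Eventually.of_forall fun x => by
      have hx : Tendsto (fun n : ℕ => (n : ℝ) - w x) atTop atTop := by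
        simp only [sub_eq_add_neg]
        exact Filter.tendsto_atTop_add_const_right _ _ tendsto_natCast_atTop_atTop
      exact hF_top.comp hx)
  simpa using h

lemma aux_J_bot (hF_mem : ∀ x : ℝ, Feps x ∈ Icc (0:ℝ) 1) (hF_cont : Continuous Feps)
    (hF_bot : Tendsto Feps atBot (nhds 0)) (hw : Measurable w) :
    Tendsto (fun n : ℕ => ∫ x, Feps (-(n : ℝ) - w x) ∂ν) atTop (nhds 0) := by
  have h := MeasureTheory.tendsto_integral_of_dominated_convergence
    (F := fun (n : ℕ) x => Feps (-(n : ℝ) - w x)) (f := fun _ => (0:ℝ)) (μ := ν)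
    (fun _ => (1:ℝ)) (fun n => aux_J_meas ν hF_cont hw _) (integrable_const 1)
    (fun n => Filter.Eventually.of_forall fun x => by
      rw [Real.norm_eq_abs, abs_of_nonneg (hF_mem _).1]; exact (hF_mem _).2)
    (Filter.Eventually.of_forall fun x => by
      have hx : Tendsto (fun n : ℕ => -(n : ℝ) - w x) atTop atBot := by
        simp only [sub_eq_add_neg]
        exact Filter.tendsto_atBot_add_const_right _ _
          (tendsto_neg_atTop_atBot.comp tendsto_natCast_atTop_atTop)
      exact hF_bot.comp hx)
  simpa using h

end AuxQIQ

/-- fix `τ ∈ (0,1)`. If `F_ε` is continuous and strictly increasing, then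
`f(y*_τ) = y*_τ`. -/
theorem stmt12
    {X1 X2 : Type*} [MeasurableSpace X1] [MeasurableSpace X2]
    [StandardBorelSpace X1] [StandardBorelSpace X2]
    (μ : Measure X1) [IsProbabilityMeasure μ]
    (κ : Kernel (X1 × ℝ) X2) [IsMarkovKernel κ]
    (m c : X2 → ℝ) (hm : Measurable m) (hc : Measurable c)
    (Feps : ℝ → ℝ) (hF_mono : Monotone Feps)
    (hF_rc : ∀ x : ℝ, ContinuousWithinAt Feps (Ici x) x)
    (hF_bot : Tendsto Feps atBot (nhds 0)) (hF_top : Tendsto Feps atTop (nhds 1))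
    (hF_mem : ∀ x : ℝ, Feps x ∈ Icc (0:ℝ) 1)
    (hF_cont : Continuous Feps) (hF_strict : StrictMono Feps)
    (τ : ℝ) (hτ : τ ∈ Ioo (0:ℝ) 1) :
    fQIQ μ κ m c Feps τ (ystar μ κ m c Feps τ) = ystar μ κ m c Feps τ := by
  classical
  set w : X2 → ℝ := fun h₂ => m h₂ + |c h₂| with hw_def
  have hw : Measurable w := hm.add hc.abs
  set J : ℝ → ℝ → X1 → ℝ := fun a y h₁ => ∫ h₂, Feps (y - w h₂) ∂κ (h₁, a) with hJ_def
  -- rewriting prPi in terms of J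
  have hsgnc : ∀ (y : ℝ) (h₂ : X2),
      Feps (y - m h₂ - sgn (c h₂) * c h₂) = Feps (y - w h₂) := by
    intro y h₂
    congr 1
    simp only [hw_def, sgn]
    split
    · rw [abs_of_nonneg ‹_›]; ring
    · rw [abs_of_neg (lt_of_not_ge ‹_›)]; ring
  have hprPi : ∀ (π₁ : X1 → ℝ) (y : ℝ),
      prPi μ κ m c Feps π₁ (fun h₂ => sgn (c h₂)) y = ∫ h₁, J (π₁ h₁) y h₁ ∂μ := by
    intro π₁ y
    unfold prPi
    simp only [hsgnc, hJ_def]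
  -- dfun in terms of J
  have hd : ∀ (h₁ : X1) (y : ℝ), dfun κ m c Feps h₁ y = J (-1) y h₁ - J 1 y h₁ := by
    intro h₁ y
    have hmap : ∀ a : ℝ, Ifun y Feps (Gdist κ m c h₁ a) = J a y h₁ := by
      intro a
      have hint_meas : AEStronglyMeasurable (fun p : ℝ × ℝ => Feps (y - p.1 - |p.2|))
          ((κ (h₁, a)).map (fun h₂ => (m h₂, c h₂))) := by
        apply Measurable.aestronglyMeasurable
        exact hF_cont.measurable.comp
          ((measurable_const.sub measurable_fst).sub measurable_snd.abs)
      unfold Ifun Gdist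
      rw [integral_map (hm.prodMk hc).aemeasurable hint_meas]
      simp only [hJ_def, hw_def, sub_sub]
    unfold dfun
    rw [hmap, hmap]
  -- measurability of J in h₁
  have hJmeas : ∀ (a y : ℝ), Measurable (fun h₁ => J a y h₁) := by
    intro a y
    have h1 : StronglyMeasurable (fun p : (X1 × ℝ) × X2 => Feps (y - w p.2)) :=
      (hF_cont.measurable.comp (measurable_const.sub (hw.comp measurable_snd))).stronglyMeasurable
    have h2 := h1.integral_kernel_prod_right' (κ := κ)
    exact h2.measurable.comp (measurable_id.prodMk measurable_const)
  have hprob : ∀ (h₁ : X1) (a : ℝ), IsProbabilityMeasure (κ (h₁, a)) :=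
    fun h₁ a => IsMarkovKernel.isProbabilityMeasure _
  -- basic J facts
  have hJmem : ∀ (a y : ℝ) (h₁ : X1), J a y h₁ ∈ Icc (0:ℝ) 1 := by
    intro a y h₁
    have := hprob h₁ a
    exact aux_J_mem (κ (h₁, a)) hF_mem hF_cont hw y
  have hJcont : ∀ (a : ℝ) (h₁ : X1), Continuous (fun y => J a y h₁) := by
    intro a h₁
    have := hprob h₁ a
    exact aux_J_cont (κ (h₁, a)) hF_mem hF_cont hw
  have hJstrict : ∀ (a : ℝ) (h₁ : X1), StrictMono (fun y => J a y h₁) := by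
    intro a h₁
    have := hprob h₁ a
    exact aux_J_strict (κ (h₁, a)) hF_mem hF_cont hF_strict hw
  have hJtop : ∀ (a : ℝ) (h₁ : X1), Tendsto (fun n : ℕ => J a (n : ℝ) h₁) atTop (nhds 1) := by
    intro a h₁
    have := hprob h₁ a
    exact aux_J_top (κ (h₁, a)) hF_mem hF_cont hF_top hw
  have hJbot : ∀ (a : ℝ) (h₁ : X1), Tendsto (fun n : ℕ => J a (-(n : ℝ)) h₁) atTop (nhds 0) := by
    intro a h₁
    have := hprob h₁ a
    exact aux_J_bot (κ (h₁, a)) hF_mem hF_cont hF_bot hw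
  -- the two main functions
  set ys : ℝ := ystar μ κ m c Feps τ with hys_def
  set hfun : ℝ → ℝ := fun y => ∫ h₁, min (J (-1) y h₁) (J 1 y h₁) ∂μ with hhfun_def
  set gfun : ℝ → ℝ := fun y =>
    ∫ h₁, (if 0 ≤ dfun κ m c Feps h₁ ys then J 1 y h₁ else J (-1) y h₁) ∂μ with hgfun_def
  -- pointwise identities
  have hptmin : ∀ (y : ℝ) (h₁ : X1),
      J (Gam κ m c Feps h₁ y) y h₁ = min (J (-1) y h₁) (J 1 y h₁) := by
    intro y h₁
    unfold Gam sgn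
    rw [hd]
    split_ifs with h
    · rw [min_eq_right (by linarith)]
    · rw [min_eq_left (by linarith)]
  have hptif : ∀ (y : ℝ) (h₁ : X1),
      J (Gam κ m c Feps h₁ ys) y h₁ =
        if 0 ≤ dfun κ m c Feps h₁ ys then J 1 y h₁ else J (-1) y h₁ := by
    intro y h₁
    unfold Gam sgn
    split_ifs <;> rfl
  -- prPi identities
  have hprPi_h : ∀ y : ℝ,
      prPi μ κ m c Feps (fun h₁ => Gam κ m c Feps h₁ y) (fun h₂ => sgn (c h₂)) y = hfun y := by
    intro y
    rw [hprPi]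
    exact integral_congr_ae (Filter.Eventually.of_forall fun h₁ => hptmin y h₁)
  have hprPi_g : ∀ y : ℝ,
      prPi μ κ m c Feps (fun h₁ => Gam κ m c Feps h₁ ys) (fun h₂ => sgn (c h₂)) y = gfun y := by
    intro y
    rw [hprPi]
    exact integral_congr_ae (Filter.Eventually.of_forall fun h₁ => hptif y h₁)
  have hgh : gfun ys = hfun ys := by
    refine integral_congr_ae (Filter.Eventually.of_forall fun h₁ => ?_)
    show (if 0 ≤ dfun κ m c Feps h₁ ys then J 1 ys h₁ else J (-1) ys h₁) =
      min (J (-1) ys h₁) (J 1 ys h₁)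
    rw [← hptif ys h₁, hptmin ys h₁]
  -- measurability and integrability of integrands over μ
  have hdmeas : MeasurableSet {h₁ : X1 | 0 ≤ dfun κ m c Feps h₁ ys} := by
    have heq : (fun h₁ => dfun κ m c Feps h₁ ys) = fun h₁ => J (-1) ys h₁ - J 1 ys h₁ :=
      funext fun h₁ => hd h₁ ys
    exact measurableSet_le measurable_const (by rw [heq]; exact (hJmeas _ _).sub (hJmeas _ _))
  have hmin_meas : ∀ y : ℝ, Measurable (fun h₁ => min (J (-1) y h₁) (J 1 y h₁)) :=
    fun y => (hJmeas _ _).min (hJmeas _ _)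
  have hmin_int : ∀ y : ℝ, Integrable (fun h₁ => min (J (-1) y h₁) (J 1 y h₁)) μ := by
    intro y
    refine aux_integrable_of_Icc μ (hmin_meas y).aestronglyMeasurable fun h₁ => ?_
    constructor
    · exact le_min (hJmem _ _ _).1 (hJmem _ _ _).1
    · exact min_le_of_left_le (hJmem _ _ _).2
  have hif_meas : ∀ y : ℝ,
      Measurable (fun h₁ => if 0 ≤ dfun κ m c Feps h₁ ys then J 1 y h₁ else J (-1) y h₁) :=
    fun y => Measurable.ite hdmeas (hJmeas _ _) (hJmeas _ _)
  have hif_int : ∀ y : ℝ,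
      Integrable (fun h₁ => if 0 ≤ dfun κ m c Feps h₁ ys then J 1 y h₁ else J (-1) y h₁) μ := by
    intro y
    refine aux_integrable_of_Icc μ (hif_meas y).aestronglyMeasurable fun h₁ => ?_
    split_ifs
    · exact hJmem _ _ _
    · exact hJmem _ _ _
  -- hfun: monotone, continuous, limits
  have hhmono : Monotone hfun := by
    intro y y' hyy'
    refine integral_mono (hmin_int y) (hmin_int y') fun h₁ => ?_
    exact min_le_min (((hJstrict (-1) h₁).monotone) hyy') (((hJstrict 1 h₁).monotone) hyy')
  have hhcont : Continuous hfun := by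
    refine continuous_of_dominated (F := fun y h₁ => min (J (-1) y h₁) (J 1 y h₁))
      (bound := fun _ => (1:ℝ)) (fun y => (hmin_meas y).aestronglyMeasurable)
      (fun y => Filter.Eventually.of_forall fun h₁ => ?_) (integrable_const 1)
      (Filter.Eventually.of_forall fun h₁ => (hJcont (-1) h₁).min (hJcont 1 h₁))
    rw [Real.norm_eq_abs, abs_of_nonneg (le_min (hJmem _ _ _).1 (hJmem _ _ _).1)]
    exact min_le_of_left_le (hJmem _ _ _).2
  have hhtop : Tendsto (fun n : ℕ => hfun (n : ℝ)) atTop (nhds 1) := by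
    have h := MeasureTheory.tendsto_integral_of_dominated_convergence
      (F := fun (n : ℕ) h₁ => min (J (-1) (n : ℝ) h₁) (J 1 (n : ℝ) h₁))
      (f := fun _ => (1:ℝ)) (μ := μ) (fun _ => (1:ℝ))
      (fun n => (hmin_meas _).aestronglyMeasurable) (integrable_const 1)
      (fun n => Filter.Eventually.of_forall fun h₁ => by
        rw [Real.norm_eq_abs, abs_of_nonneg (le_min (hJmem _ _ _).1 (hJmem _ _ _).1)]
        exact min_le_of_left_le (hJmem _ _ _).2)
      (Filter.Eventually.of_forall fun h₁ => by
        have := (hJtop (-1) h₁).min (hJtop 1 h₁)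
        simpa using this)
    simpa using h
  have hhbot : Tendsto (fun n : ℕ => hfun (-(n : ℝ))) atTop (nhds 0) := by
    have h := MeasureTheory.tendsto_integral_of_dominated_convergence
      (F := fun (n : ℕ) h₁ => min (J (-1) (-(n : ℝ)) h₁) (J 1 (-(n : ℝ)) h₁))
      (f := fun _ => (0:ℝ)) (μ := μ) (fun _ => (1:ℝ))
      (fun n => (hmin_meas _).aestronglyMeasurable) (integrable_const 1)
      (fun n => Filter.Eventually.of_forall fun h₁ => by
        rw [Real.norm_eq_abs, abs_of_nonneg (le_min (hJmem _ _ _).1 (hJmem _ _ _).1)]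
        exact min_le_of_left_le (hJmem _ _ _).2)
      (Filter.Eventually.of_forall fun h₁ => by
        have := (hJbot (-1) h₁).min (hJbot 1 h₁)
        simpa using this)
    simpa using h
  -- gfun is strictly monotone
  have hgstrict : StrictMono gfun := by
    intro y y' hyy'
    refine aux_integral_strict μ (hif_int y) (hif_int y') fun h₁ => ?_
    split_ifs
    · exact hJstrict 1 h₁ hyy'
    · exact hJstrict (-1) h₁ hyy'
  -- the set S defining ystar
  set S : Set ℝ := {y : ℝ | τ ≤ hfun y} with hS_def
  have hys_inf : ys = sInf S := by
    rw [hys_def]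
    unfold ystar
    congr 1
    ext y
    rw [mem_setOf_eq, hprPi_h y]
    rfl
  have hS_closed : IsClosed S := isClosed_le continuous_const hhcont
  have hS_nonempty : S.Nonempty := by
    obtain ⟨N, hN⟩ := (hhtop.eventually (eventually_ge_nhds hτ.2)).exists
    exact ⟨(N : ℝ), hN⟩
  have hS_bdd : BddBelow S := by
    obtain ⟨N, hN⟩ := (hhbot.eventually (eventually_lt_nhds hτ.1)).exists
    refine ⟨-(N : ℝ), fun y hy => ?_⟩
    by_contra hcon
    push_neg at hcon
    exact absurd hy (by simp only [hS_def, mem_setOf_eq, not_le]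
                        exact lt_of_le_of_lt (hhmono hcon.le) hN)
  have hys_mem : ys ∈ S := by
    rw [hys_inf]
    exact hS_closed.csInf_mem hS_nonempty hS_bdd
  have hys_lb : ∀ y < ys, hfun y < τ := by
    intro y hy
    by_contra hcon
    push_neg at hcon
    have : ys ≤ y := by rw [hys_inf]; exact csInf_le hS_bdd hcon
    linarith
  -- hfun ys = τ
  have hh_ys : hfun ys = τ := by
    refine le_antisymm ?_ hys_mem
    have hseq : Tendsto (fun n : ℕ => hfun (ys - 1 / (n + 1))) atTop (nhds (hfun ys)) := by
      refine hhcont.continuousAt.tendsto.comp ?_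
      have : Tendsto (fun n : ℕ => 1 / ((n : ℝ) + 1)) atTop (nhds 0) :=
        tendsto_one_div_add_atTop_nhds_zero_nat
      have h2 : Tendsto (fun n : ℕ => ys - 1 / ((n : ℝ) + 1)) atTop (nhds (ys - 0)) :=
        tendsto_const_nhds.sub this
      simpa using h2
    refine le_of_tendsto hseq (Filter.Eventually.of_forall fun n => ?_)
    refine (hys_lb _ ?_).le
    have : (0:ℝ) < 1 / ((n : ℝ) + 1) := by positivity
    linarith
  have hg_ys : gfun ys = τ := by rw [hgh, hh_ys]
  -- conclude
  have hT : ∀ y : ℝ, y ∈ {y : ℝ | τ ≤ gfun y} → ys ≤ y := by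
    intro y hy
    by_contra hcon
    push_neg at hcon
    have : gfun y < gfun ys := hgstrict hcon
    rw [hg_ys] at this
    exact absurd hy (by simp only [mem_setOf_eq, not_le]; exact this)
  have hys_T : ys ∈ {y : ℝ | τ ≤ gfun y} := by
    rw [mem_setOf_eq, hg_ys]
  have hsetT : {y : ℝ | τ ≤ prPi μ κ m c Feps
      (fun h₁ => Gam κ m c Feps h₁ ys) (fun h₂ => sgn (c h₂)) y} =
      {y : ℝ | τ ≤ gfun y} := by
    ext y
    rw [mem_setOf_eq, mem_setOf_eq, hprPi_g y]
  unfold fQIQ quant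
  rw [hsetT]
  exact le_antisymm (csInf_le ⟨ys, hT⟩ hys_T) (le_csInf ⟨ys, hys_T⟩ hT)
end
end
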